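/- arXiv:1709.06334 — 7 statements merged into one kernel-verified Lean document; each statement's English description precedes it below -/
import Mathlib

section
/- Let m ≥ 3, t, and n be positive integers. If 2(m-2)n² + t(m-4)² is a prime number, then there exist no positive integers a, b and no integer c (with c a positive integer when m = 3 or m = 4, and c an arbitrary integer when m > 4) such that a + b = n and ab = t·P(m,c). -/
/-- The `c`-th `m`-gonal number: `P(m,c) = c((m-2)c - (m-4))/2`. -/
def polygonal (m c : ℤ) : ℤ := c * ((m - 2) * c - (m - 4)) / 2

/-- `r_{m,t}(n)`: the number of unordered pairs `{a,b}` of positive integers with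
`a + b = n` such that `ab = t·P(m,c)` for some `c`, where `c` ranges over positive
integers if `m = 3` or `m = 4`, and over all integers if `m > 4`. -/
noncomputable def rmt (m t n : ℕ) : ℕ :=
  Set.ncard {p : ℕ × ℕ | 0 < p.1 ∧ p.1 ≤ p.2 ∧ p.1 + p.2 = n ∧
    ∃ c : ℤ, ((m = 3 ∨ m = 4) → 0 < c) ∧ (p.1 : ℤ) * p.2 = t * polygonal m c}

/-- `r'_{m,t}(n)`: the number of pairs `(x,y)` of nonnegative integers with
`2(m-2)n² + t(m-4)² = 2(m-2)x² + t y²`. -/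
noncomputable def rmt' (m t n : ℕ) : ℕ :=
  Set.ncard {p : ℕ × ℕ |
    2 * ((m : ℤ) - 2) * (n : ℤ) ^ 2 + t * ((m : ℤ) - 4) ^ 2 =
    2 * ((m : ℤ) - 2) * (p.1 : ℤ) ^ 2 + t * (p.2 : ℤ) ^ 2}

/-- `d_A(n)`: the number of positive divisors of `n` not divisible by any prime in `A`.
Equivalently, `∏_{p prime, p ∉ A} (1 + ord_p(n))`. -/
def dA (A : Finset ℕ) (n : ℕ) : ℕ :=
  (n.divisors.filter (fun d => ∀ p ∈ A, ¬ p ∣ d)).card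

set_option maxHeartbeats 1600000 in
theorem stmt_0 (m t n : ℕ) (hm : 3 ≤ m) (ht : 0 < t) (hn : 0 < n)
    (hp : Prime (2 * ((m : ℤ) - 2) * (n : ℤ) ^ 2 + t * ((m : ℤ) - 4) ^ 2)) :
    ¬ ∃ (a b : ℕ) (c : ℤ), 0 < a ∧ 0 < b ∧ a + b = n ∧
      ((m = 3 ∨ m = 4) → 0 < c) ∧ (a : ℤ) * b = t * polygonal m c := by
  rintro ⟨a, b, c, ha, hb, hab, -, habc⟩
  have hn1 : (1:ℤ) ≤ (n:ℤ) := by exact_mod_cast hn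
  have ht1 : (1:ℤ) ≤ (t:ℤ) := by exact_mod_cast ht
  have hm3 : (3:ℤ) ≤ (m:ℤ) := by exact_mod_cast hm
  have ha1 : (1:ℤ) ≤ (a:ℤ) := by exact_mod_cast ha
  have hb1 : (1:ℤ) ≤ (b:ℤ) := by exact_mod_cast hb
  have habn : (a:ℤ) + (b:ℤ) = (n:ℤ) := by exact_mod_cast hab
  by_cases hm4 : m = 4
  · subst hm4
    have h4 : 2 * (((4:ℕ) : ℤ) - 2) * (n : ℤ) ^ 2 + t * (((4:ℕ):ℤ) - 4) ^ 2
        = (2*(n:ℤ)) * (2*(n:ℤ)) := by push_cast; ring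
    rw [h4] at hp
    have hd : (2*(n:ℤ)) * (2*(n:ℤ)) ∣ 2*(n:ℤ) :=
      (hp.2.2 _ _ dvd_rfl).elim id id
    have hle := Int.le_of_dvd (by linarith) hd
    nlinarith
  -- main case: m ≠ 4
  have hy2 : (1:ℤ) ≤ ((m:ℤ) - 4)^2 := by
    have h : (m:ℤ) - 4 ≤ -1 ∨ 1 ≤ (m:ℤ) - 4 := by omega
    rcases h with h | h <;> nlinarith
  have hn2 : (1:ℤ) ≤ (n:ℤ)^2 := by nlinarith
  -- 2 * polygonal
  have hdvd2 : (2:ℤ) ∣ c * (((m:ℤ) - 2) * c - ((m:ℤ) - 4)) := by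
    rcases Int.even_or_odd c with ⟨k, hk⟩ | ⟨k, hk⟩
    · exact ⟨k * (((m:ℤ)-2)*c - ((m:ℤ)-4)), by rw [hk]; ring⟩
    · exact ⟨(2*k+1) * (((m:ℤ)-2)*k + 1), by rw [hk]; ring⟩
  have h2poly : 2 * polygonal (m:ℤ) c = c * (((m:ℤ) - 2) * c - ((m:ℤ) - 4)) := by
    unfold polygonal
    exact Int.mul_ediv_cancel' hdvd2
  have h2ab : 2 * ((a:ℤ) * b) = (t:ℤ) * (c * (((m:ℤ) - 2) * c - ((m:ℤ) - 4))) := by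
    rw [← h2poly]; linarith [habc]
  set p : ℤ := 2 * ((m : ℤ) - 2) * (n : ℤ) ^ 2 + t * ((m : ℤ) - 4) ^ 2 with hpdef
  set X : ℤ := (a:ℤ) - (b:ℤ) with hXdef
  set Y : ℤ := 2*((m:ℤ)-2)*c - ((m:ℤ)-4) with hYdef
  have h1 : 2*((m:ℤ)-2) * X^2 + (t:ℤ) * Y^2 = p := by
    rw [hpdef, hXdef, hYdef, ← habn]
    linear_combination (-4*((m:ℤ)-2)) * h2ab
  clear_value p X Y
  have hpne : p ≠ 0 := hp.ne_zero
  have hppos : 0 < p := by rw [hpdef]; nlinarith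
  have hpA : ¬ p ∣ 2*((m:ℤ)-2) := by
    intro hd
    have hle := Int.le_of_dvd (by linarith) hd
    rw [hpdef] at hle
    nlinarith
  have hkey : 2*((m:ℤ)-2) * (((n:ℤ)*Y - X*((m:ℤ)-4)) * ((n:ℤ)*Y + X*((m:ℤ)-4)))
      = p * (Y^2 - ((m:ℤ)-4)^2) := by
    linear_combination (-((m:ℤ)-4)^2) * h1 + (-Y^2) * hpdef
  have hpdvd : p ∣ ((n:ℤ)*Y - X*((m:ℤ)-4)) ∨ p ∣ ((n:ℤ)*Y + X*((m:ℤ)-4)) := by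
    have hd : p ∣ 2*((m:ℤ)-2) * (((n:ℤ)*Y - X*((m:ℤ)-4)) * ((n:ℤ)*Y + X*((m:ℤ)-4))) :=
      ⟨Y^2 - ((m:ℤ)-4)^2, hkey⟩
    rcases hp.2.2 _ _ hd with h | h
    · exact absurd h hpA
    · exact hp.2.2 _ _ h
  have haux : (2:ℤ) ≤ 2*((m:ℤ)-2)*(t:ℤ) := by nlinarith
  -- in either case, (nY)^2 = (Xy)^2
  have hsq : ((n:ℤ)*Y)^2 = (X*((m:ℤ)-4))^2 := by
    rcases hpdvd with ⟨k, hk⟩ | ⟨k, hk⟩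
    · have hB : p * p = (2*((m:ℤ)-2)*(n:ℤ)*X + (t:ℤ)*((m:ℤ)-4)*Y)^2
          + 2*((m:ℤ)-2)*(t:ℤ) * ((n:ℤ)*Y - X*((m:ℤ)-4))^2 := by
        linear_combination (-p) * h1 + (2*((m:ℤ)-2)*X^2 + (t:ℤ)*Y^2) * hpdef
      rw [hk] at hB
      have hk0 : k = 0 := by
        by_contra hk0
        have hk2 : (1:ℤ) ≤ k^2 := by
          rcases (by omega : (1:ℤ) ≤ k ∨ k ≤ -1) with h | h <;> nlinarith
        have hpk : p*p ≤ (p*k)^2 := by nlinarith [mul_pos hppos hppos]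
        nlinarith [sq_nonneg (2*((m:ℤ)-2)*(n:ℤ)*X + (t:ℤ)*((m:ℤ)-4)*Y),
          mul_pos hppos hppos, sq_nonneg (p*k)]
      rw [hk0, mul_zero] at hk
      have h0 : (n:ℤ)*Y = X*((m:ℤ)-4) := by linarith
      rw [h0]
    · have hB : p * p = (2*((m:ℤ)-2)*(n:ℤ)*X - (t:ℤ)*((m:ℤ)-4)*Y)^2
          + 2*((m:ℤ)-2)*(t:ℤ) * ((n:ℤ)*Y + X*((m:ℤ)-4))^2 := by
        linear_combination (-p) * h1 + (2*((m:ℤ)-2)*X^2 + (t:ℤ)*Y^2) * hpdef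
      rw [hk] at hB
      have hk0 : k = 0 := by
        by_contra hk0
        have hk2 : (1:ℤ) ≤ k^2 := by
          rcases (by omega : (1:ℤ) ≤ k ∨ k ≤ -1) with h | h <;> nlinarith
        have hpk : p*p ≤ (p*k)^2 := by nlinarith [mul_pos hppos hppos]
        nlinarith [sq_nonneg (2*((m:ℤ)-2)*(n:ℤ)*X - (t:ℤ)*((m:ℤ)-4)*Y),
          mul_pos hppos hppos, sq_nonneg (p*k)]
      rw [hk0, mul_zero] at hk
      have h0 : (n:ℤ)*Y = -(X*((m:ℤ)-4)) := by linarith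
      rw [h0]; ring
  have hfin : (n:ℤ)^2 * p = X^2 * p := by
    linear_combination (t:ℤ) * hsq + (-(n:ℤ)^2) * h1 + (-(X^2)) * hpdef
  have hnX : (n:ℤ)^2 = X^2 := mul_right_cancel₀ hpne hfin
  rw [hXdef, ← habn] at hnX
  nlinarith
end

section
/- Let n be a positive integer and let m = 3 or m = p + 2 for an odd prime p. Then r_{m,1}(n) = r'_{m,1}(n) - 1. -/
/-
Write `P = m - 2`, an odd number which is `1` or a prime. Twice the `c`-th `m`-gonal number is
`c (P c - (P - 2))`, and `(2 P c - (P - 2))² = 4 P c (P c - (P - 2)) + (P - 2)²`. Hence a splitting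
`n = a + b` with `2 a b = c (P c - (P - 2))` yields the solution `(x, y) = (b - a, |2 P c - (P - 2)|)`
of `2 P n² + (P - 2)² = 2 P x² + y²`. Conversely, every solution has `2 P ∣ y² - (P - 2)²` with `y`
odd, so `P`, being prime, divides `y + (P - 2)` or `y - (P - 2)`, and by parity `y = ±(2 P c - (P - 2))`
for some `c`; then `n² - x² = 2 c (P c - (P - 2)) ≥ 0`, and unless `(x, y) = (n, |P - 2|)` the pair
`((n - x) / 2, (n + x) / 2)` is a splitting. This is a bijection, which accounts for the `- 1`.
-/

namespace Polygonal

theorem even_mul_mul_sub_sub (P c : ℤ) : Even (c * (P * c - (P - 2))) := by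
  have : c * (P * c - (P - 2)) = P * (c * (c - 1)) + 2 * c := by ring
  rw [this]
  exact (Int.even_mul_pred_self c).mul_left P |>.add (even_two_mul c)

variable {P : ℤ}

theorem mul_mul_sub_sub_nonneg (hP : 0 < P) (c : ℤ) : 0 ≤ c * (P * c - (P - 2)) := by
  rcases le_or_gt 0 c with hc | hc
  · have : 0 ≤ c * (c - 1) := by rcases hc.eq_or_lt with rfl | hc <;> nlinarith
    nlinarith
  · exact mul_nonneg_of_nonpos_of_nonpos hc.le (by nlinarith)

theorem exists_sq_eq_of_dvd (hPodd : Odd P) (hP : P = 1 ∨ Prime P) {y : ℤ} (hy : 0 ≤ y)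
    (h : 2 * P ∣ y ^ 2 - (P - 2) ^ 2) :
    ∃ c, (P = 1 → 0 ≤ c) ∧ y ^ 2 = (2 * P * c - (P - 2)) ^ 2 := by
  have hyodd : Odd y := by
    have h2 : Even (y ^ 2 - (P - 2) ^ 2) := even_iff_two_dvd.2 (dvd_trans (dvd_mul_right 2 P) h)
    simpa [Int.even_sub, Int.even_pow, Int.not_even_iff_odd.2 hPodd] using h2
  rcases hP with rfl | hP
  · obtain ⟨c, rfl⟩ := hyodd
    exact ⟨c, fun _ => by omega, by ring⟩
  have hfac : P ∣ (y + (P - 2)) * (y - (P - 2)) :=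
    dvd_trans (dvd_mul_left P 2) (by rwa [← sq_sub_sq])
  have hPne : P ≠ 1 := by rintro rfl; exact hP.not_isUnit isUnit_one
  have two_mul_dvd {d : ℤ} (hd : Even d) (hPd : P ∣ d) : ∃ c, d = 2 * P * c := by
    obtain ⟨k, rfl⟩ := hPd
    obtain ⟨c, rfl⟩ := (Int.even_mul.1 hd).resolve_left (Int.not_even_iff_odd.2 hPodd)
    exact ⟨c, by ring⟩
  have hP2 : Odd (P - 2) := hPodd.sub_even even_two
  rcases hP.dvd_or_dvd hfac with hd | hd
  · obtain ⟨c, hc⟩ := two_mul_dvd (hyodd.add_odd hP2) hd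
    exact ⟨c, fun h => absurd h hPne, by rw [← hc]; ring⟩
  · obtain ⟨c, hc⟩ := two_mul_dvd (hyodd.sub_odd hP2) hd
    exact ⟨-c, fun h => absurd h hPne, by rw [eq_add_of_sub_eq hc]; ring⟩

def solutions (P : ℤ) (n : ℕ) : Set (ℕ × ℕ) :=
  {z | 2 * P * n ^ 2 + (P - 2) ^ 2 = 2 * P * z.1 ^ 2 + z.2 ^ 2}

-- `c * (P * c - (P - 2))` is twice the `c`-th `(P + 2)`-gonal number.
def splittings (P : ℤ) (n : ℕ) : Set (ℕ × ℕ) :=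
  {z | 0 < z.1 ∧ z.1 ≤ z.2 ∧ z.1 + z.2 = n ∧
    ∃ c : ℤ, (P = 1 → 0 < c) ∧ 2 * (z.1 * z.2 : ℤ) = c * (P * c - (P - 2))}

variable {n : ℕ}

theorem mk_natAbs_mem_solutions : (n, (P - 2).natAbs) ∈ solutions P n := by
  simp [solutions]

theorem eq_of_mem_solutions {z w : ℕ × ℕ} (hz : z ∈ solutions P n) (hw : w ∈ solutions P n)
    (h : z.1 = w.1) : z = w := by
  have : (z.2 : ℤ) ^ 2 = w.2 ^ 2 := by
    simp only [solutions, Set.mem_ofPred_eq] at hz hw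
    rw [h] at hz
    linarith
  exact Prod.ext h (Nat.pow_left_injective two_ne_zero (by exact_mod_cast this))

theorem exists_of_mem_solutions (hP0 : 0 < P) (hPodd : Odd P) (hP : P = 1 ∨ Prime P)
    {z : ℕ × ℕ} (hz : z ∈ solutions P n) :
    ∃ c, (P = 1 → 0 ≤ c) ∧ (n : ℤ) ^ 2 - z.1 ^ 2 = 2 * (c * (P * c - (P - 2))) := by
  have hdiff : (z.2 : ℤ) ^ 2 - (P - 2) ^ 2 = 2 * P * ((n : ℤ) ^ 2 - z.1 ^ 2) := by
    simp only [solutions, Set.mem_ofPred_eq] at hz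
    linear_combination -hz
  obtain ⟨c, hc, hsq⟩ := exists_sq_eq_of_dvd hPodd hP (Nat.cast_nonneg z.2) ⟨_, hdiff⟩
  refine ⟨c, hc, mul_left_cancel₀ (mul_ne_zero two_ne_zero hP0.ne') ?_⟩
  linear_combination -hdiff + hsq

theorem exists_of_mem_solutions_of_ne (hP0 : 0 < P) (hPodd : Odd P) (hP : P = 1 ∨ Prime P)
    {z : ℕ × ℕ} (hz : z ∈ solutions P n) (hne : z ≠ (n, (P - 2).natAbs)) :
    ∃ k, 0 < k ∧ n = z.1 + 2 * k ∧
      ∃ c : ℤ, (P = 1 → 0 < c) ∧ 2 * ((k : ℤ) * (z.1 + k)) = c * (P * c - (P - 2)) := by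
  obtain ⟨c, hc, hcz⟩ := exists_of_mem_solutions hP0 hPodd hP hz
  have hle : z.1 ≤ n := by
    have := mul_mul_sub_sub_nonneg hP0 c
    have : (z.1 : ℤ) ^ 2 ≤ n ^ 2 := by linarith
    exact_mod_cast (pow_le_pow_iff_left₀ (Nat.cast_nonneg _) (Nat.cast_nonneg _) two_ne_zero).1 this
  have hlt : z.1 < n := hle.lt_of_ne fun h => hne (eq_of_mem_solutions hz mk_natAbs_mem_solutions h)
  obtain ⟨k, hk⟩ : Even (n - z.1) := by
    have : Even ((n : ℤ) ^ 2 - z.1 ^ 2) := hcz ▸ even_two_mul _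
    simpa [Nat.even_sub hle, Int.even_sub, Int.even_pow] using this
  refine ⟨k, by omega, by omega, c, fun h1 => (hc h1).lt_of_ne ?_, ?_⟩
  · rintro rfl
    have : (n : ℤ) = z.1 + 2 * k := by omega
    nlinarith
  · have : (n : ℤ) = z.1 + 2 * k := by omega
    rw [this] at hcz
    linarith

theorem bijOn_solutions_splittings (hP0 : 0 < P) (hPodd : Odd P) (hP : P = 1 ∨ Prime P) :
    Set.BijOn (fun z : ℕ × ℕ => ((n - z.1) / 2, (n + z.1) / 2))
      (solutions P n \ {(n, (P - 2).natAbs)}) (splittings P n) := by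
  refine ⟨?mapsTo, ?injOn, ?surjOn⟩
  case mapsTo =>
    rintro z ⟨hz, hne⟩
    obtain ⟨k, hk, hn, c, hc, hkc⟩ := exists_of_mem_solutions_of_ne hP0 hPodd hP hz hne
    have ha : (n - z.1) / 2 = k := by omega
    have hb : (n + z.1) / 2 = z.1 + k := by omega
    dsimp only
    rw [ha, hb]
    refine ⟨hk, by omega, by omega, c, hc, ?_⟩
    push_cast
    exact hkc
  case injOn =>
    rintro z ⟨hz, hzne⟩ w ⟨hw, hwne⟩ h
    obtain ⟨k, -, hk, -⟩ := exists_of_mem_solutions_of_ne hP0 hPodd hP hz hzne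
    obtain ⟨l, -, hl, -⟩ := exists_of_mem_solutions_of_ne hP0 hPodd hP hw hwne
    simp only [Prod.mk.injEq] at h
    exact eq_of_mem_solutions hz hw (by omega)
  case surjOn =>
    rintro ⟨a, b⟩ ⟨ha, hab, rfl, c, -, habc⟩
    refine ⟨(b - a, (2 * P * c - (P - 2)).natAbs), ⟨?_, ?_⟩, ?_⟩
    · simp only [solutions, Set.mem_ofPred_eq, Int.natCast_natAbs, sq_abs]
      push_cast [hab]
      linear_combination 4 * P * habc
    · simp only [Set.mem_singleton_iff, Prod.mk.injEq]
      omega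
    · simp only [Prod.mk.injEq]
      omega

theorem ncard_splittings (hP0 : 0 < P) (hPodd : Odd P) (hP : P = 1 ∨ Prime P) :
    (splittings P n).ncard = (solutions P n).ncard - 1 := by
  rw [← (bijOn_solutions_splittings hP0 hPodd hP).ncard_eq,
    Set.ncard_sdiff_singleton_of_mem mk_natAbs_mem_solutions]

theorem rmt_eq_ncard_splittings {P : ℕ} (hP : Odd P) (n : ℕ) :
    rmt (P + 2) 1 n = (splittings P n).ncard := by
  have hm : (P + 2 = 3 ∨ P + 2 = 4) ↔ (P : ℤ) = 1 := by
    obtain ⟨k, rfl⟩ := hP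
    omega
  have hpoly (c : ℤ) : polygonal (P + 2 : ℕ) c = c * (P * c - (P - 2)) / 2 := by
    unfold polygonal
    push_cast
    ring_nf
  unfold rmt splittings
  congr 1
  ext z
  simp only [Set.mem_ofPred_eq, hm, Nat.cast_one, one_mul, hpoly]
  refine and_congr_right' <| and_congr_right' <| and_congr_right' <|
    exists_congr fun c => and_congr_right' ?_
  obtain ⟨k, hk⟩ := even_mul_mul_sub_sub (P : ℤ) c
  omega

theorem rmt'_eq_ncard_solutions (P n : ℕ) : rmt' (P + 2) 1 n = (solutions P n).ncard := by
  unfold rmt' solutions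
  congr! 3
  push_cast
  ring_nf

end Polygonal

theorem stmt_1_general (m n : ℕ)
    (hm : m = 3 ∨ ∃ p : ℕ, p.Prime ∧ Odd p ∧ m = p + 2) :
    rmt m 1 n = rmt' m 1 n - 1 := by
  obtain ⟨P, rfl, hPodd, hP⟩ : ∃ P : ℕ, m = P + 2 ∧ Odd P ∧ (P = 1 ∨ P.Prime) := by
    rcases hm with rfl | ⟨p, hp, hpodd, rfl⟩
    · exact ⟨1, rfl, odd_one, Or.inl rfl⟩
    · exact ⟨p, rfl, hpodd, Or.inr hp⟩
  rw [Polygonal.rmt_eq_ncard_splittings hPodd, Polygonal.rmt'_eq_ncard_solutions]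
  refine Polygonal.ncard_splittings (by exact_mod_cast hPodd.pos) (by exact_mod_cast hPodd) ?_
  exact hP.imp (by exact_mod_cast ·) Nat.prime_iff_prime_int.1

theorem stmt_1 (m n : ℕ) (hn : 0 < n)
    (hm : m = 3 ∨ ∃ p : ℕ, p.Prime ∧ Odd p ∧ m = p + 2) :
    rmt m 1 n = rmt' m 1 n - 1 :=
  stmt_1_general m n hm
end

section
/- Let n be a positive integer, let t be an odd prime, and let m = 3 or m = p + 2 for an odd prime p, with t ≠ m - 2. Then r_{m,t}(n) = r'_{m,t}(n) - 1. -/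
/-!
Completing the square turns `a * b = t * P(m, c)` with `a + b = n` into
`2(m-2)n² + t(m-4)² = 2(m-2)(b-a)² + t(2(m-2)c - (m-4))²`, so `(a, b) ↦ (b - a, |2(m-2)c - (m-4)|)`
maps the pairs counted by `r_{m,t}(n)` injectively to the nontrivial solutions counted by
`r'_{m,t}(n)`, the trivial one being `(n, |m-4|)`. Conversely a solution `(x, y)` comes from some
`c` as soon as `y ≡ ±(m-4) mod 2(m-2)`: both are odd, and when `m - 2` is a prime other than `t`
the equation gives `m - 2 ∣ y² - (m-4)²`. Then `n² - x² = 4tP(m, c)` with `P(m, c) ≥ 0`, so a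
nontrivial solution has `x < n` and `n ≡ x mod 2`.
-/

lemma two_mul_polygonal (m c : ℤ) : 2 * polygonal m c = c * ((m - 2) * c - (m - 4)) := by
  have heven : Even (c * ((m - 2) * c - (m - 4))) := by
    have hsplit : c * ((m - 2) * c - (m - 4)) = (m - 2) * (c * (c - 1)) + 2 * c := by ring
    rw [hsplit]
    exact ((Int.even_mul_pred_self c).mul_left _).add (even_two_mul c)
  exact Int.mul_ediv_cancel' heven.two_dvd

lemma sq_two_mul_sub_eq (m c : ℤ) :
    (2 * (m - 2) * c - (m - 4)) ^ 2 = 8 * (m - 2) * polygonal m c + (m - 4) ^ 2 := by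
  linear_combination 4 * (m - 2) * (two_mul_polygonal m c).symm

lemma polygonal_nonneg {m : ℤ} (hm : 3 ≤ m) (c : ℤ) : 0 ≤ polygonal m c := by
  have h2 := two_mul_polygonal m c
  obtain hc | rfl | hc := lt_trichotomy c 0
  · have hneg : (m - 2) * c - (m - 4) ≤ 0 := by nlinarith
    nlinarith [mul_nonneg_of_nonpos_of_nonpos hc.le hneg]
  · simp [polygonal]
  · have hpos : 0 ≤ (m - 2) * c - (m - 4) := by nlinarith
    nlinarith [mul_nonneg hc.le hpos]

lemma odd_of_two_mul_add_mul_sq_eq {q s t n x y : ℤ} (ht : Odd t) (hs : Odd s)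
    (h : 2 * q * n ^ 2 + t * s ^ 2 = 2 * q * x ^ 2 + t * y ^ 2) : Odd y := by
  have hpar := congrArg Even h
  simp only [parity_simps] at hpar
  rw [← Int.not_even_iff_odd] at ht hs ⊢
  tauto

/-- The congruence `y ≡ ±s mod 2q`, in a form that does not fix the sign. -/
lemma exists_sq_two_mul_sub_eq {q s y : ℤ} (hq : Prime q) (hqo : Odd q) (hs : Odd s)
    (hy : Odd y) (h : q ∣ y ^ 2 - s ^ 2) : ∃ c, (2 * q * c - s) ^ 2 = y ^ 2 := by
  have h2q : IsCoprime 2 q := by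
    obtain ⟨k, rfl⟩ := hqo
    exact ⟨-k, 1, by ring⟩
  have hfac : y ^ 2 - s ^ 2 = (s + y) * (y - s) := by ring
  rw [hfac] at h
  rcases hq.dvd_or_dvd h with hplus | hminus
  · obtain ⟨c, hc⟩ := h2q.mul_dvd (hs.add_odd hy).two_dvd hplus
    exact ⟨c, by linear_combination -(2 * q * c - s + y) * hc⟩
  · obtain ⟨c, hc⟩ := h2q.mul_dvd (hy.sub_odd hs).two_dvd hminus
    exact ⟨-c, by linear_combination -(2 * q * c + s + y) * hc⟩

def rmtSet (m t n : ℕ) : Set (ℕ × ℕ) :=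
  {p : ℕ × ℕ | 0 < p.1 ∧ p.1 ≤ p.2 ∧ p.1 + p.2 = n ∧
    ∃ c : ℤ, ((m = 3 ∨ m = 4) → 0 < c) ∧ (p.1 : ℤ) * p.2 = t * polygonal m c}

def rmt'Set (m t n : ℕ) : Set (ℕ × ℕ) :=
  {p : ℕ × ℕ |
    2 * ((m : ℤ) - 2) * (n : ℤ) ^ 2 + t * ((m : ℤ) - 4) ^ 2 =
    2 * ((m : ℤ) - 2) * (p.1 : ℤ) ^ 2 + t * (p.2 : ℤ) ^ 2}

section Correspondence

variable {m t n : ℕ}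

lemma trivial_mem_rmt'Set : (n, ((m : ℤ) - 4).natAbs) ∈ rmt'Set m t n := by
  simp only [rmt'Set, Set.mem_ofPred_eq, Int.natAbs_sq]

lemma mem_rmt'Set_of_mem_rmtSet {a b : ℕ} (hab : (a, b) ∈ rmtSet m t n) :
    ∃ y, (b - a, y) ∈ rmt'Set m t n \ {(n, ((m : ℤ) - 4).natAbs)} := by
  obtain ⟨ha, hle, hsum, c, -, hc⟩ := hab
  refine ⟨(2 * ((m : ℤ) - 2) * c - ((m : ℤ) - 4)).natAbs, ?_, ?_⟩
  · simp only [rmt'Set, Set.mem_ofPred_eq, Int.natAbs_sq]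
    rw [Nat.cast_sub hle, ← hsum]
    push_cast
    linear_combination 8 * ((m : ℤ) - 2) * hc - t * sq_two_mul_sub_eq m c
  · simp only [Set.mem_singleton_iff, Prod.mk.injEq, not_and]
    omega

lemma snd_eq_of_mem_rmt'Set (ht : 0 < t) {x y₁ y₂ : ℕ} (h₁ : (x, y₁) ∈ rmt'Set m t n)
    (h₂ : (x, y₂) ∈ rmt'Set m t n) : y₁ = y₂ := by
  simp only [rmt'Set, Set.mem_ofPred_eq] at h₁ h₂
  have htZ : (t : ℤ) ≠ 0 := by exact_mod_cast ht.ne'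
  have hsq : (y₁ : ℤ) ^ 2 = y₂ ^ 2 := mul_left_cancel₀ htZ (by linear_combination h₂ - h₁)
  simpa using Int.natAbs_eq_iff_sq_eq.mpr hsq

lemma sq_sub_sq_eq_of_mem_rmt'Set (hm : m ≠ 2) {x y : ℕ} {c : ℤ} (hxy : (x, y) ∈ rmt'Set m t n)
    (hc : (2 * ((m : ℤ) - 2) * c - ((m : ℤ) - 4)) ^ 2 = y ^ 2) :
    (n : ℤ) ^ 2 - x ^ 2 = 4 * t * polygonal m c := by
  simp only [rmt'Set, Set.mem_ofPred_eq] at hxy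
  have hq : 2 * ((m : ℤ) - 2) ≠ 0 := by omega
  apply mul_left_cancel₀ hq
  linear_combination hxy + t * (hc.symm.trans (sq_two_mul_sub_eq m c))

variable (hm : 3 ≤ m) (ht : 0 < t)
  (hsol : ∀ x y : ℕ, (x, y) ∈ rmt'Set m t n →
    ∃ c : ℤ, (m = 3 ∨ m = 4 → 0 ≤ c) ∧ (2 * ((m : ℤ) - 2) * c - ((m : ℤ) - 4)) ^ 2 = y ^ 2)
include hm ht hsol

lemma lt_and_mem_rmtSet_of_mem_rmt'Set {x y : ℕ}
    (hxy : (x, y) ∈ rmt'Set m t n \ {(n, ((m : ℤ) - 4).natAbs)}) :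
    x < n ∧ ((n - x) / 2, (n + x) / 2) ∈ rmtSet m t n := by
  obtain ⟨hmem, hne⟩ := hxy
  obtain ⟨c, hc0, hc⟩ := hsol x y hmem
  have htZ : (0 : ℤ) < t := by exact_mod_cast ht
  have hP := polygonal_nonneg (by exact_mod_cast hm : (3 : ℤ) ≤ m) c
  have hkey := sq_sub_sq_eq_of_mem_rmt'Set (by omega) hmem hc
  rw [sq_two_mul_sub_eq] at hc
  have hPpos : 0 < polygonal m c := by
    refine hP.lt_of_ne fun hP0 => hne ?_
    rw [← hP0, mul_zero, zero_add, ← Int.natAbs_eq_iff_sq_eq, Int.natAbs_natCast] at hc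
    rw [← hP0, mul_zero, sub_eq_zero, ← Int.natAbs_eq_iff_sq_eq] at hkey
    simp only [Int.natAbs_natCast] at hkey
    rw [Set.mem_singleton_iff, hkey, hc]
  have hxn : x < n := by
    have : (x : ℤ) ^ 2 < n ^ 2 := by nlinarith
    exact_mod_cast lt_of_pow_lt_pow_left₀ 2 (by positivity) this
  have hpar : Even ((n : ℤ) - x) := by
    have h : Even ((n : ℤ) ^ 2 - x ^ 2) := ⟨2 * t * polygonal m c, by rw [hkey]; ring⟩
    simpa [parity_simps] using h
  have hsum_even : (x + n) % 2 = 0 := by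
    obtain ⟨k, hk⟩ := hpar
    omega
  refine ⟨hxn, by omega, by omega, by omega, c, fun h34 => ?_, ?_⟩
  · refine (hc0 h34).lt_of_ne ?_
    rintro rfl
    simp [polygonal] at hPpos
  · obtain ⟨k, hk⟩ := hpar
    have ha : (((n - x) / 2 : ℕ) : ℤ) = k := by omega
    have hb : (((n + x) / 2 : ℕ) : ℤ) = k + x := by omega
    rw [ha, hb]
    apply mul_left_cancel₀ (four_ne_zero : (4 : ℤ) ≠ 0)
    linear_combination hkey - ((n : ℤ) + x + k + k) * hk

theorem rmt_eq_rmt'_sub_one_of_forall_exists : rmt m t n = rmt' m t n - 1 := by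
  set f : ℕ × ℕ → ℕ × ℕ := fun p => ((n - p.1) / 2, (n + p.1) / 2)
  have hinj : Set.InjOn f (rmt'Set m t n \ {(n, ((m : ℤ) - 4).natAbs)}) := by
    rintro ⟨x₁, y₁⟩ h₁ ⟨x₂, y₂⟩ h₂ heq
    have hx₁ := (lt_and_mem_rmtSet_of_mem_rmt'Set hm ht hsol h₁).1
    have hx₂ := (lt_and_mem_rmtSet_of_mem_rmt'Set hm ht hsol h₂).1
    simp only [f, Prod.mk.injEq] at heq
    obtain rfl : x₁ = x₂ := by omega
    rw [snd_eq_of_mem_rmt'Set ht h₁.1 h₂.1]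
  have himage : f '' (rmt'Set m t n \ {(n, ((m : ℤ) - 4).natAbs)}) = rmtSet m t n := by
    refine subset_antisymm ?_ fun ⟨a, b⟩ hab => ?_
    · rintro _ ⟨⟨x, y⟩, hxy, rfl⟩
      exact (lt_and_mem_rmtSet_of_mem_rmt'Set hm ht hsol hxy).2
    · obtain ⟨y, hy⟩ := mem_rmt'Set_of_mem_rmtSet hab
      obtain ⟨-, hle, hsum, -⟩ := hab
      refine ⟨(b - a, y), hy, ?_⟩
      simp only [f, Prod.mk.injEq]
      omega
  change (rmtSet m t n).ncard = (rmt'Set m t n).ncard - 1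
  rw [← himage, hinj.ncard_image, Set.ncard_sdiff_singleton_of_mem trivial_mem_rmt'Set]

end Correspondence

lemma exists_sq_eq_of_mem_rmt'Set {m t n : ℕ} (ht : t.Prime) (htodd : Odd t)
    (hm : m = 3 ∨ ∃ p : ℕ, p.Prime ∧ Odd p ∧ m = p + 2) (htm : t ≠ m - 2) {x y : ℕ}
    (hxy : (x, y) ∈ rmt'Set m t n) :
    ∃ c : ℤ, (m = 3 ∨ m = 4 → 0 ≤ c) ∧ (2 * ((m : ℤ) - 2) * c - ((m : ℤ) - 4)) ^ 2 = y ^ 2 := by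
  have htZ : Odd (t : ℤ) := (Int.odd_coe_nat t).mpr htodd
  rcases hm with rfl | ⟨p, hp, hpodd, rfl⟩
  · obtain ⟨c, hc⟩ := odd_of_two_mul_add_mul_sq_eq htZ (by decide) hxy
    exact ⟨c, fun _ => by omega, by rw [hc]; push_cast; ring⟩
  · have hq : ((p + 2 : ℕ) : ℤ) - 2 = p := by push_cast; ring
    have hs : ((p + 2 : ℕ) : ℤ) - 4 = p - 2 := by push_cast; ring
    have hpZ : Prime (p : ℤ) := Nat.prime_iff_prime_int.mp hp
    have hpoddZ : Odd (p : ℤ) := (Int.odd_coe_nat p).mpr hpodd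
    have hsodd : Odd ((p : ℤ) - 2) := hpoddZ.sub_even even_two
    simp only [rmt'Set, Set.mem_ofPred_eq, hq, hs] at hxy
    have hpt : ¬ (p : ℤ) ∣ t := by
      rw [Int.natCast_dvd_natCast, Nat.prime_dvd_prime_iff_eq hp ht]
      omega
    have hdvd : (p : ℤ) ∣ t * (y ^ 2 - (p - 2) ^ 2) :=
      ⟨2 * (n ^ 2 - x ^ 2), by linear_combination -hxy⟩
    obtain ⟨c, hc⟩ := exists_sq_two_mul_sub_eq hpZ hpoddZ hsodd
      (odd_of_two_mul_add_mul_sq_eq htZ hsodd hxy) ((hpZ.dvd_or_dvd hdvd).resolve_left hpt)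
    refine ⟨c, fun h34 => ?_, by rw [hq, hs]; exact hc⟩
    obtain ⟨k, rfl⟩ := hpodd
    have := hp.two_le
    omega

theorem stmt_3_general (m t n : ℕ) (ht : t.Prime) (htodd : Odd t)
    (hm : m = 3 ∨ ∃ p : ℕ, p.Prime ∧ Odd p ∧ m = p + 2) (htm : t ≠ m - 2) :
    rmt m t n = rmt' m t n - 1 := by
  have hm3 : 3 ≤ m := by
    obtain rfl | ⟨p, hp, -, rfl⟩ := hm
    · rfl
    · have := hp.two_le
      omega
  exact rmt_eq_rmt'_sub_one_of_forall_exists hm3 ht.pos fun _ _ hxy =>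
    exists_sq_eq_of_mem_rmt'Set ht htodd hm htm hxy

theorem stmt_3 (m t n : ℕ) (hn : 0 < n) (ht : t.Prime) (htodd : Odd t)
    (hm : m = 3 ∨ ∃ p : ℕ, p.Prime ∧ Odd p ∧ m = p + 2) (htm : t ≠ m - 2) :
    rmt m t n = rmt' m t n - 1 :=
  stmt_3_general m t n ht htodd hm htm
end

section
/- For every positive integer n, r_{3,1}(n) = ⌊(d(2n² + 1) - 1)/2⌋. -/
/-! A pair `a ≤ b` with `a + b = n` is counted iff `ab` is triangular, i.e. `8ab + 1 = x²`.
Since `8ab + 1 = 2n² + 1 - 2(b - a)²`, these pairs correspond to the representations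
`x² + 2y² = 2n² + 1` other than `(1, n)`.

In the norm-Euclidean ring `ℤ[√-2]` the element `α = 1 + n√-2` is coprime to its conjugate,
so every `β` of norm `N(α)` factors as `β = γδ` with `γ ∣ α`, `δ ∣ ᾱ`; then `β` is determined up to
sign by `N(γ)`, which can be any divisor of `N(α)`. Conjugating `β` replaces `N(γ)` by
`N(α) / N(γ)`, so the representations by nonnegative `(x, y)` correspond to the divisors `d` of
`2n² + 1` with `d² ≤ 2n² + 1`, of which there are `⌊(d(2n² + 1) + 1) / 2⌋`. -/

theorem two_mul_abs_sub_round_div_mul_le (t : ℤ) {N : ℤ} (hN : 0 < N) :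
    2 * |t - round (t / N : ℚ) * N| ≤ N := by
  have hN' : (0 : ℚ) < N := by exact_mod_cast hN
  have h := abs_sub_round (t / N : ℚ)
  have e : ((t - round (t / N : ℚ) * N : ℤ) : ℚ) = (t / N - round (t / N : ℚ)) * N := by
    push_cast; field_simp
  have : 2 * |((t - round (t / N : ℚ) * N : ℤ) : ℚ)| ≤ N := by
    rw [e, abs_mul, abs_of_pos hN']
    nlinarith
  exact_mod_cast this

theorem star_dvd_star {R : Type*} [CommSemiring R] [StarRing R] {x y : R} (h : x ∣ y) :
    star x ∣ star y :=
  map_dvd (starRingEnd R) h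

theorem IsCoprime.associated_of_mul_eq_mul {R : Type*} [CommRing R] [IsDomain R]
    {a b γ γ' δ δ' : R} (h : IsCoprime a b) (hγ : γ ∣ a) (hγ' : γ' ∣ a) (hδ : δ ∣ b)
    (hδ' : δ' ∣ b) (he : γ * δ = γ' * δ') : Associated γ γ' :=
  associated_of_dvd_dvd
    (((h.of_isCoprime_of_dvd_left hγ).of_isCoprime_of_dvd_right hδ').dvd_of_dvd_mul_right
      (he ▸ dvd_mul_right γ δ))
    (((h.of_isCoprime_of_dvd_left hγ').of_isCoprime_of_dvd_right hδ).dvd_of_dvd_mul_right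
      (he ▸ dvd_mul_right γ' δ'))

theorem Nat.card_filter_mul_self_le_eq (N : ℕ) :
    (N.divisors.filter (fun k => k * k ≤ N)).card =
      (N.divisors.filter (fun k => N ≤ k * k)).card := by
  refine Finset.card_nbij' (N / ·) (N / ·) ?_ ?_ ?_ ?_
  · intro k hk
    simp only [Finset.coe_filter, Nat.mem_divisors, Set.mem_ofPred_eq] at hk ⊢
    obtain ⟨⟨⟨m, rfl⟩, hN0⟩, hkm⟩ := hk
    rw [Nat.mul_div_cancel_left m (Nat.pos_of_ne_zero (by rintro rfl; simp at hN0))]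
    exact ⟨⟨Dvd.intro_left k rfl, hN0⟩, by nlinarith⟩
  · intro m hm
    simp only [Finset.coe_filter, Nat.mem_divisors, Set.mem_ofPred_eq] at hm ⊢
    obtain ⟨⟨⟨k, rfl⟩, hN0⟩, hmk⟩ := hm
    have hm0 : 0 < m := Nat.pos_of_ne_zero (by rintro rfl; simp at hN0)
    rw [Nat.mul_div_cancel_left k hm0]
    exact ⟨⟨Dvd.intro_left m rfl, hN0⟩,
      Nat.mul_le_mul_right k (Nat.le_of_mul_le_mul_left hmk hm0)⟩
  all_goals
    intro k hk
    exact Nat.div_div_self (Nat.mem_divisors.1 (Finset.mem_filter.1 hk).1).1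
      (Nat.mem_divisors.1 (Finset.mem_filter.1 hk).1).2

theorem Nat.two_mul_card_filter_mul_self_le (N : ℕ) :
    2 * (N.divisors.filter (fun k => k * k ≤ N)).card =
      N.divisors.card + (N.divisors.filter (fun k => k * k = N)).card := by
  set A := N.divisors.filter (fun k => k * k ≤ N)
  set B := N.divisors.filter (fun k => N ≤ k * k)
  have hunion : A ∪ B = N.divisors := by
    ext k
    simp only [A, B, Finset.mem_union, Finset.mem_filter]
    constructor
    · rintro (h | h) <;> exact h.1
    · intro h
      exact (le_total (k * k) N).imp (⟨h, ·⟩) (⟨h, ·⟩)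
  have hinter : A ∩ B = N.divisors.filter (fun k => k * k = N) := by
    ext k
    simp only [A, B, Finset.mem_inter, Finset.mem_filter]
    constructor
    · rintro ⟨⟨h, h₁⟩, -, h₂⟩
      exact ⟨h, le_antisymm h₁ h₂⟩
    · rintro ⟨h, h'⟩
      exact ⟨⟨h, h'.le⟩, h, h'.ge⟩
  have := Finset.card_union_add_card_inter A B
  have hAB : A.card = B.card := Nat.card_filter_mul_self_le_eq N
  rw [hunion, hinter, ← hAB] at this
  omega

namespace Zsqrtd

variable {d : ℤ}

def roundDiv (x y : ℤ√d) : ℤ√d :=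
  ⟨round ((x * star y).re / y.norm : ℚ), round ((x * star y).im / y.norm : ℚ)⟩

/-- The remainder `r` satisfies `r ȳ = a + b√d` with `|a|, |b| ≤ N(y)/2`, so
`N(r) N(y) ≤ (1 - d) N(y)² / 4 < N(y)²`. -/
theorem norm_sub_mul_roundDiv_lt (hd : d < 0) (hd3 : -3 < d) (x : ℤ√d) {y : ℤ√d}
    (hy : y ≠ 0) : (x - y * roundDiv x y).norm < y.norm := by
  have hN : 0 < y.norm :=
    (norm_nonneg hd.le y).lt_of_ne' (mt (norm_eq_zero_iff hd y).1 hy)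
  set q := roundDiv x y
  set a := (x * star y).re - q.re * y.norm
  set b := (x * star y).im - q.im * y.norm
  have hr : (x - y * q) * star y = ⟨a, b⟩ := by
    rw [sub_mul, mul_right_comm y q, ← norm_eq_mul_conj]
    ext <;> simp [a, b, mul_comm]
  have hnorm : (x - y * q).norm * y.norm = a ^ 2 - d * b ^ 2 := by
    rw [← norm_conj y, ← norm_mul, hr, norm_def]; ring
  have ha : 2 * |a| ≤ y.norm := two_mul_abs_sub_round_div_mul_le _ hN
  have hb : 2 * |b| ≤ y.norm := two_mul_abs_sub_round_div_mul_le _ hN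
  have ha2 : 4 * a ^ 2 ≤ y.norm ^ 2 := by nlinarith [sq_abs a, abs_nonneg a]
  have hb2 : 4 * b ^ 2 ≤ y.norm ^ 2 := by nlinarith [sq_abs b, abs_nonneg b]
  nlinarith [sq_nonneg b]

noncomputable instance : EuclideanDomain (ℤ√(-2)) where
  quotient := roundDiv
  remainder x y := x - y * roundDiv x y
  quotient_zero x := by ext <;> simp [roundDiv]
  quotient_mul_add_remainder_eq _ _ := add_sub_cancel _ _
  r x y := x.norm.natAbs < y.norm.natAbs
  r_wellFounded := (measure (Int.natAbs ∘ norm)).wf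
  remainder_lt x y hy := by
    have := norm_sub_mul_roundDiv_lt (by norm_num) (by norm_num) x hy
    have := norm_nonneg (by norm_num) (x - y * roundDiv x y)
    omega
  mul_left_not_lt x y hy := by
    rw [not_lt, norm_mul, Int.natAbs_mul]
    exact Nat.le_mul_of_pos_right _ (Int.natAbs_pos.2 (mt (norm_eq_zero_iff (by norm_num) y).1 hy))

theorem eq_one_or_eq_neg_one_of_isUnit (hd : d < -1) {u : ℤ√d} (hu : IsUnit u) :
    u = 1 ∨ u = -1 := by
  have h := (norm_eq_one_iff' (by omega) u).2 hu
  rw [norm_def] at h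
  have him : u.im = 0 := by nlinarith [mul_self_nonneg u.re, mul_self_nonneg u.im]
  rw [him, mul_zero, sub_zero, mul_self_eq_one_iff] at h
  rcases h with h | h
  · exact Or.inl (Zsqrtd.ext h him)
  · exact Or.inr (Zsqrtd.ext h (by simp [him]))

theorem eq_or_eq_neg_of_associated (hd : d < -1) {x y : ℤ√d} (h : Associated x y) :
    y = x ∨ y = -x := by
  obtain ⟨u, rfl⟩ := h
  rcases eq_one_or_eq_neg_one_of_isUnit hd u.isUnit with hu | hu <;> simp [hu]

theorem eq_or_eq_neg_or_eq_star_or_eq_neg_star {x y : ℤ√d} (hre : x.re.natAbs = y.re.natAbs)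
    (him : x.im.natAbs = y.im.natAbs) : y = x ∨ y = -x ∨ y = star x ∨ y = -star x := by
  rcases Int.natAbs_eq_natAbs_iff.1 hre with hre | hre <;>
    rcases Int.natAbs_eq_natAbs_iff.1 him with him | him
  · exact Or.inl (Zsqrtd.ext hre.symm him.symm)
  · exact Or.inr (Or.inr (Or.inl (Zsqrtd.ext hre.symm (by simp [him]))))
  · exact Or.inr (Or.inr (Or.inr (Zsqrtd.ext (by simp [hre]) (by simp [him]))))
  · exact Or.inr (Or.inl (Zsqrtd.ext (by simp [hre]) (by simp [him])))

theorem natAbs_re_sq_add_two_mul_natAbs_im_sq {β : ℤ√(-2)} {N : ℕ} (hβ : β.norm = N) :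
    β.re.natAbs ^ 2 + 2 * β.im.natAbs ^ 2 = N := by
  zify
  rw [sq_abs, sq_abs, ← hβ, norm_def]
  ring

theorem isCoprime_mk_one_star (n : ℤ) : IsCoprime (⟨1, n⟩ : ℤ√(-2)) (star ⟨1, n⟩) :=
  ⟨star ⟨1, n⟩ - ⟨n ^ 2, 0⟩, -⟨n ^ 2, 0⟩, by ext <;> simp <;> ring⟩

theorem norm_mk_one (n : ℤ) : (⟨1, n⟩ : ℤ√(-2)).norm = 2 * n ^ 2 + 1 := by
  rw [norm_def]; ring

section CoprimeToConj

variable {α : ℤ√(-2)}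

theorem norm_eq_of_mul_eq_mul (hα : IsCoprime α (star α)) {γ γ' δ δ' : ℤ√(-2)} (hγ : γ ∣ α)
    (hγ' : γ' ∣ α) (hδ : δ ∣ star α) (hδ' : δ' ∣ star α) (he : γ * δ = γ' * δ') :
    γ.norm = γ'.norm :=
  norm_eq_of_associated (by norm_num) (hα.associated_of_mul_eq_mul hγ hγ' hδ hδ' he)

theorem associated_of_dvd_of_norm_eq (hα : IsCoprime α (star α)) {γ γ' : ℤ√(-2)} (hγ : γ ∣ α)
    (hγ' : γ' ∣ α) (he : γ.norm = γ'.norm) : Associated γ γ' :=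
  hα.associated_of_mul_eq_mul hγ hγ' (star_dvd_star hγ) (star_dvd_star hγ')
    (by rw [← norm_eq_mul_conj, ← norm_eq_mul_conj, he])

theorem exists_dvd_dvd_star_of_norm_eq {β : ℤ√(-2)} (hβ : β.norm = α.norm) :
    ∃ γ δ, γ ∣ α ∧ δ ∣ star α ∧ β = γ * δ :=
  exists_dvd_and_dvd_of_dvd_mul
    (by rw [← norm_eq_mul_conj, ← hβ, norm_eq_mul_conj]; exact dvd_mul_right β _)

/-- Writing `k = γδ` with `γ ∣ α`, `δ ∣ ᾱ`, conjugation gives the second splitting `k = δ̄γ̄`,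
so `γ ~ δ̄` and `k² = N(γ)²`. -/
theorem exists_dvd_norm_eq (hα : IsCoprime α (star α)) {k : ℕ} (hk : (k : ℤ) ∣ α.norm) :
    ∃ γ, γ ∣ α ∧ γ.norm = k := by
  have hkα : (k : ℤ√(-2)) ∣ α * star α := by
    rw [← norm_eq_mul_conj, ← Int.cast_natCast, intCast_dvd_intCast]; exact hk
  obtain ⟨γ, δ, hγ, hδ, hkγδ⟩ := exists_dvd_and_dvd_of_dvd_mul hkα
  have hconj : γ * δ = star δ * star γ := by
    rw [← star_mul, ← hkγδ]; ext <;> simp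
  have hγδ : γ.norm = δ.norm := by
    rw [norm_eq_of_mul_eq_mul hα hγ (by simpa using star_dvd_star hδ) hδ (star_dvd_star hγ)
      hconj, norm_conj]
  refine ⟨γ, hγ, (sq_eq_sq₀ (norm_nonneg (by norm_num) γ) (Int.natCast_nonneg k)).1 ?_⟩
  have := congrArg norm hkγδ
  rw [norm_natCast, norm_mul, ← hγδ] at this
  rw [sq, sq, this]

theorem mul_eq_or_eq_neg_of_norm_eq (hα : IsCoprime α (star α)) {γ γ' δ δ' : ℤ√(-2)}
    (hγ : γ ∣ α) (hγ' : γ' ∣ α) (hδ : δ ∣ star α) (hδ' : δ' ∣ star α)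
    (hnorm : (γ * δ).norm = (γ' * δ').norm) (hγγ' : γ.norm = γ'.norm) :
    γ' * δ' = γ * δ ∨ γ' * δ' = -(γ * δ) := by
  have hγ0 : γ.norm ≠ 0 := by
    rw [Ne, norm_eq_zero_iff (by norm_num)]
    rintro rfl
    rw [zero_dvd_iff] at hγ
    exact not_isCoprime_zero_zero (by simpa [hγ] using hα)
  have hδδ' : δ.norm = δ'.norm := by
    rw [norm_mul, norm_mul, ← hγγ'] at hnorm
    exact mul_left_cancel₀ hγ0 hnorm
  have hα' : IsCoprime (star α) (star (star α)) := by rw [star_star]; exact hα.symm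
  exact eq_or_eq_neg_of_associated (by norm_num) <|
    (associated_of_dvd_of_norm_eq hα hγ hγ' hγγ').mul_mul
      (associated_of_dvd_of_norm_eq hα' hδ hδ' hδδ')

theorem norm_eq_of_natAbs_eq (hα : IsCoprime α (star α)) {γ₁ c₁ γ₂ c₂ : ℤ√(-2)}
    (h₁ : α = γ₁ * c₁) (h₂ : α = γ₂ * c₂) (hs₁ : γ₁.norm * γ₁.norm ≤ α.norm)
    (hs₂ : γ₂.norm * γ₂.norm ≤ α.norm)
    (hre : (γ₁ * star c₁).re.natAbs = (γ₂ * star c₂).re.natAbs)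
    (him : (γ₁ * star c₁).im.natAbs = (γ₂ * star c₂).im.natAbs) : γ₁.norm = γ₂.norm := by
  have hγ₁ : γ₁ ∣ α := Dvd.intro _ h₁.symm
  have hc₁ : c₁ ∣ α := Dvd.intro_left _ h₁.symm
  have hnorm : ∀ {γ δ}, γ ∣ α → δ ∣ star α → γ₂ * star c₂ = γ * δ → γ₂.norm = γ.norm :=
    fun hγ hδ => norm_eq_of_mul_eq_mul hα (Dvd.intro _ h₂.symm) hγ
      (star_dvd_star (Dvd.intro_left _ h₂.symm)) hδ
  suffices γ₂.norm = γ₁.norm ∨ γ₂.norm = c₁.norm by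
    rcases this with h | h
    · exact h.symm
    · have hγc : γ₁.norm * c₁.norm = α.norm := by rw [← norm_mul, ← h₁]
      have h₁0 := norm_nonneg (by norm_num) γ₁
      have h₂0 := norm_nonneg (by norm_num) γ₂
      rw [← h] at hγc
      exact _root_.le_antisymm (by nlinarith) (by nlinarith)
  rcases eq_or_eq_neg_or_eq_star_or_eq_neg_star hre him with h | h | h | h
  · exact Or.inl (hnorm hγ₁ (star_dvd_star hc₁) h)
  · exact Or.inl (hnorm hγ₁ (neg_dvd.2 (star_dvd_star hc₁)) (by rw [h, mul_neg]))
  · exact Or.inr (hnorm hc₁ (star_dvd_star hγ₁) (by rw [h, star_mul', star_star, mul_comm]))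
  · exact Or.inr (hnorm hc₁ (neg_dvd.2 (star_dvd_star hγ₁))
      (by rw [h, star_mul', star_star, mul_comm, mul_neg]))

theorem exists_mul_self_le_forall_natAbs_eq (hα : IsCoprime α (star α)) {β : ℤ√(-2)}
    (hβ : β.norm = α.norm) :
    ∃ k : ℕ, (k : ℤ) ∣ α.norm ∧ (k : ℤ) * k ≤ α.norm ∧ ∀ γ c, α = γ * c → γ.norm = k →
      (γ * star c).re.natAbs = β.re.natAbs ∧ (γ * star c).im.natAbs = β.im.natAbs := by
  have key : ∀ {γ₀ δ₀}, γ₀ ∣ α → δ₀ ∣ star α → (γ₀ * δ₀).norm = α.norm → ∀ γ c, α = γ * c →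
      γ.norm = γ₀.norm → (γ * star c).re.natAbs = (γ₀ * δ₀).re.natAbs ∧
        (γ * star c).im.natAbs = (γ₀ * δ₀).im.natAbs := by
    intro γ₀ δ₀ hγ₀ hδ₀ hβ₀ γ c hc hγ
    rcases mul_eq_or_eq_neg_of_norm_eq hα hγ₀ (Dvd.intro _ hc.symm) hδ₀
        (star_dvd_star (Dvd.intro_left _ hc.symm))
        (by rw [hβ₀, norm_mul, norm_conj, ← norm_mul, ← hc]) hγ.symm with h | h <;>
      rw [h] <;> simp only [re_neg, im_neg, Int.natAbs_neg, and_self]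
  obtain ⟨γ₀, δ₀, hγ₀, hδ₀, rfl⟩ := exists_dvd_dvd_star_of_norm_eq hβ
  obtain ⟨k, hk⟩ := Int.eq_ofNat_of_zero_le (norm_nonneg (by norm_num) γ₀)
  obtain ⟨k', hk'⟩ := Int.eq_ofNat_of_zero_le (norm_nonneg (by norm_num) δ₀)
  have hkk' : (k : ℤ) * k' = α.norm := by rw [← hk, ← hk', ← norm_mul, hβ]
  by_cases hsmall : (k : ℤ) * k ≤ α.norm
  · exact ⟨k, Dvd.intro _ hkk', hsmall, fun γ c hc hγ => key hγ₀ hδ₀ hβ γ c hc (hγ.trans hk.symm)⟩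
  · have hk'k : (k' : ℤ) ≤ k := by nlinarith
    refine ⟨k', Dvd.intro_left _ hkk', ?_, fun γ c hc hγ => ?_⟩
    · rw [← hkk']
      exact mul_le_mul_of_nonneg_right hk'k (Int.natCast_nonneg k')
    have := key (by simpa using star_dvd_star hδ₀) (star_dvd_star hγ₀)
      (by rw [← star_mul, norm_conj, hβ]) γ c hc (by rw [hγ, norm_conj, hk'])
    rwa [← star_mul, re_star, im_star, Int.natAbs_neg] at this

theorem ncard_sq_add_two_mul_sq_eq (hα : IsCoprime α (star α)) {N : ℕ} (hN : α.norm = N) :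
    {p : ℕ × ℕ | p.1 ^ 2 + 2 * p.2 ^ 2 = N}.ncard =
      (N.divisors.filter (fun k => k * k ≤ N)).card := by
  have hN0 : N ≠ 0 := by
    rintro rfl
    rw [Nat.cast_zero, norm_eq_zero_iff (by norm_num)] at hN
    exact not_isCoprime_zero_zero (by simpa [hN] using hα)
  have hex : ∀ k, k ∣ N → ∃ γ c, α = γ * c ∧ γ.norm = k := fun k hk => by
    obtain ⟨γ, ⟨c, hc⟩, hγ⟩ := exists_dvd_norm_eq hα (hN ▸ Int.natCast_dvd_natCast.2 hk)
    exact ⟨γ, c, hc, hγ⟩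
  choose! γ c hγc hγk using hex
  have hmem : ∀ {k}, k ∈ (N.divisors.filter (fun k => k * k ≤ N) : Set ℕ) ↔
      k ∣ N ∧ k * k ≤ N := by
    simp [hN0]
  rw [← Set.ncard_coe_finset]
  symm
  refine Set.ncard_congr
    (fun k _ => ((γ k * star (c k)).re.natAbs, (γ k * star (c k)).im.natAbs)) ?_ ?_ ?_
  · intro k hk
    refine natAbs_re_sq_add_two_mul_natAbs_im_sq ?_
    rw [norm_mul, norm_conj, ← norm_mul, ← hγc k (hmem.1 hk).1, hN]
  · intro k₁ k₂ hk₁ hk₂ he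
    rw [hmem] at hk₁ hk₂
    simp only [Prod.mk.injEq] at he
    have := norm_eq_of_natAbs_eq hα (hγc k₁ hk₁.1) (hγc k₂ hk₂.1)
      (by rw [hγk k₁ hk₁.1, hN]; exact_mod_cast hk₁.2)
      (by rw [hγk k₂ hk₂.1, hN]; exact_mod_cast hk₂.2) he.1 he.2
    rw [hγk k₁ hk₁.1, hγk k₂ hk₂.1] at this
    exact_mod_cast this
  · rintro ⟨x, y⟩ hxy
    have hβ : (⟨x, y⟩ : ℤ√(-2)).norm = α.norm := by
      have : ((x ^ 2 + 2 * y ^ 2 : ℕ) : ℤ) = N := congrArg Nat.cast hxy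
      rw [hN, ← this, norm_def]; push_cast; ring
    obtain ⟨k, hkN, hks, hk⟩ := exists_mul_self_le_forall_natAbs_eq hα hβ
    rw [hN] at hkN hks
    have hkN' : k ∣ N := Int.natCast_dvd_natCast.1 hkN
    refine ⟨k, hmem.2 ⟨hkN', by exact_mod_cast hks⟩, ?_⟩
    obtain ⟨h₁, h₂⟩ := hk _ _ (hγc k hkN') (hγk k hkN')
    rw [h₁, h₂]
    simp

end CoprimeToConj

end Zsqrtd

theorem eq_polygonal_three_iff {m c : ℤ} : m = polygonal 3 c ↔ 8 * m + 1 = (2 * c + 1) ^ 2 := by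
  obtain ⟨k, hk⟩ := Int.even_mul_succ_self c
  have hP : polygonal 3 c = k := by
    rw [polygonal, show (3 - 2) * c - (3 - 4) = c + 1 by ring, hk]; omega
  rw [hP, show (2 * c + 1) ^ 2 = 4 * (c * (c + 1)) + 1 by ring, hk]
  omega

theorem exists_pos_eq_polygonal_three_iff_isSquare {m : ℕ} (hm : 0 < m) :
    (∃ c : ℤ, 0 < c ∧ (m : ℤ) = polygonal 3 c) ↔ IsSquare (8 * m + 1) := by
  simp_rw [eq_polygonal_three_iff]
  constructor
  · rintro ⟨c, -, hc⟩
    refine ⟨(2 * c + 1).natAbs, ?_⟩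
    zify
    rw [abs_mul_abs_self, ← sq, ← hc]
  · rintro ⟨r, hr⟩
    have hodd : Odd (r * r) := hr ▸ ⟨4 * m, by ring⟩
    obtain ⟨c, rfl⟩ := (Nat.odd_mul.1 hodd).1
    have hc : 0 < c := Nat.pos_of_ne_zero (by rintro rfl; omega)
    exact ⟨c, by exact_mod_cast hc, by rw [sq]; exact_mod_cast hr⟩

theorem rmt_three_one_eq (n : ℕ) :
    rmt 3 1 n = {p : ℕ × ℕ | 0 < p.1 ∧ p.1 ≤ p.2 ∧ p.1 + p.2 = n ∧
      IsSquare (8 * (p.1 * p.2) + 1)}.ncard := by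
  unfold rmt
  congr 1
  ext ⟨a, b⟩
  simp only [Set.mem_ofPred_eq]
  refine and_congr_right fun ha => and_congr_right fun hab => and_congr_right fun _ => ?_
  rw [← exists_pos_eq_polygonal_three_iff_isSquare (Nat.mul_pos ha (by omega))]
  push_cast
  simp

theorem Nat.even_of_sq_eq_four_mul_mul_add_two_mul_sq_add_one {x y t : ℕ}
    (h : x ^ 2 = 4 * y * t + 2 * t ^ 2 + 1) : Even t := by
  rcases Nat.even_or_odd' x with ⟨c, rfl | rfl⟩ <;> rcases Nat.even_or_odd' t with ⟨s, rfl | rfl⟩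
  all_goals first | exact even_two_mul s | (exfalso; ring_nf at h; omega)

/-- `(a, b) ↦ (√(8ab + 1), b - a)`, using `8ab + 1 + 2(b - a)² = 2(a + b)² + 1`; the excluded
representation `(1, n)` would need `ab = 0`. -/
theorem ncard_isSquare_pairs_add_one (n : ℕ) :
    {p : ℕ × ℕ | 0 < p.1 ∧ p.1 ≤ p.2 ∧ p.1 + p.2 = n ∧ IsSquare (8 * (p.1 * p.2) + 1)}.ncard + 1 =
      {p : ℕ × ℕ | p.1 ^ 2 + 2 * p.2 ^ 2 = 2 * n ^ 2 + 1}.ncard := by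
  set S := {p : ℕ × ℕ | p.1 ^ 2 + 2 * p.2 ^ 2 = 2 * n ^ 2 + 1}
  have hS : S.Finite := by
    refine ((Set.finite_Iic (2 * n ^ 2 + 1)).prod (Set.finite_Iic (2 * n ^ 2 + 1))).subset ?_
    rintro ⟨x, y⟩ (h : x ^ 2 + 2 * y ^ 2 = _)
    exact ⟨by simp; nlinarith, by simp; nlinarith⟩
  rw [← Set.ncard_sdiff_singleton_add_one (show (1, n) ∈ S by simp [S]; ring) hS]
  congr 1
  refine Set.ncard_congr (fun p _ => (Nat.sqrt (8 * (p.1 * p.2) + 1), p.2 - p.1)) ?_ ?_ ?_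
  · rintro ⟨a, b⟩ ⟨ha, hab, rfl, r, hr⟩
    dsimp only at ha hab hr ⊢
    obtain ⟨t, rfl⟩ := Nat.exists_eq_add_of_le hab
    simp only [hr, Nat.sqrt_eq, Nat.add_sub_cancel_left, Set.mem_sdiff, Set.mem_singleton_iff,
      Prod.mk.injEq, S, Set.mem_ofPred_eq]
    refine ⟨by nlinarith, fun h => ?_⟩
    rw [h.1] at hr
    nlinarith
  · rintro ⟨a, b⟩ ⟨a', b'⟩ ⟨-, hab, hn, -⟩ ⟨-, hab', hn', -⟩ h
    simp only [Prod.mk.injEq] at h hn hn' ⊢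
    omega
  · rintro ⟨x, y⟩ ⟨hxy, hne⟩
    simp only [S, Set.mem_ofPred_eq, Set.mem_singleton_iff, Prod.mk.injEq] at hxy hne
    have hy : y < n := by
      by_contra! hny
      have hx : x ≤ 1 := by nlinarith [Nat.pow_le_pow_left hny 2]
      interval_cases x
      · omega
      · exact hne ⟨rfl, Nat.pow_left_injective two_ne_zero (show y ^ 2 = n ^ 2 by omega)⟩
    obtain ⟨t, rfl⟩ := Nat.exists_eq_add_of_lt hy
    obtain ⟨a, ha⟩ :=
      Nat.even_of_sq_eq_four_mul_mul_add_two_mul_sq_add_one (x := x) (y := y) (t := t + 1)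
        (by nlinarith)
    have hsq : 8 * (a * (a + y)) + 1 = x * x := by nlinarith
    refine ⟨(a, a + y), ⟨by omega, by omega, by dsimp only; omega, x, hsq⟩, ?_⟩
    simp [hsq, Nat.sqrt_eq]

theorem stmt_4_general (n : ℕ) :
    rmt 3 1 n = ((2 * n ^ 2 + 1).divisors.card - 1) / 2 := by
  have hreps := Zsqrtd.ncard_sq_add_two_mul_sq_eq (Zsqrtd.isCoprime_mk_one_star n)
    (N := 2 * n ^ 2 + 1) (by rw [Zsqrtd.norm_mk_one]; push_cast; ring)
  have hpairs := ncard_isSquare_pairs_add_one n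
  have hdiv := Nat.two_mul_card_filter_mul_self_le (2 * n ^ 2 + 1)
  have hsquare : ((2 * n ^ 2 + 1).divisors.filter (fun k => k * k = 2 * n ^ 2 + 1)).card ≤ 1 :=
    Finset.card_le_one.2 fun a ha b hb =>
      Nat.mul_self_inj.1 ((Finset.mem_filter.1 ha).2.trans (Finset.mem_filter.1 hb).2.symm)
  rw [rmt_three_one_eq]
  omega

theorem stmt_4 (n : ℕ) (hn : 0 < n) :
    rmt 3 1 n = ((2 * n ^ 2 + 1).divisors.card - 1) / 2 :=
  stmt_4_general n
end

section
/- For every positive integer n, r_{5,1}(n) = ⌊(d(6n² + 1) - 1)/2⌋. -/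
/-!
Write `y = b - a` for a pair with `a + b = n`. Since `m` is a generalized pentagonal number iff
`24m + 1` is a square, and `24ab + 1 = 6n² + 1 - 6y²`, the pairs counted by `r_{5,1}(n)` are the
solutions of `x² + 6y² = N := 6n² + 1` with `x > 0` and `0 ≤ y < n` (every solution has
`y ≡ n (mod 2)`, so `a` and `b` are integers).

All solutions with `x > 0` correspond to the divisors of `N` via `(x, y) ↦ gcd(N, nx - y)`. As
`n⁻¹` is a square root of `-6` modulo `N`, `gcd(N, nx - y) · gcd(N, nx + y) = N`. Injectivity
then follows from Brahmagupta's identity, and surjectivity from a pigeonhole argument à la Thue,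
which yields `ξ² + 6η² = kN` with `0 < k < 5` and the prescribed divisibilities; `k = 2, 3` are
impossible modulo `3` and `9`, and `k = 4` reduces to `k = 1` by halving.

Finally the set of `y` is symmetric, contains `±n` and otherwise lies in `(-n, n)`, so
`d(N) = 2 r_{5,1}(n) + 2 - [y = 0 occurs]`.
-/

open Finset

lemma polygonal_five_eq_iff (c m : ℤ) : polygonal 5 c = m ↔ (6 * c - 1) ^ 2 = 24 * m + 1 := by
  have h2 : 2 ∣ c * (3 * c - 1) := by
    rcases Int.even_or_odd c with ⟨k, rfl⟩ | ⟨k, rfl⟩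
    · exact ⟨k * (3 * (k + k) - 1), by ring⟩
    · exact ⟨(2 * k + 1) * (3 * k + 1), by ring⟩
  obtain ⟨w, hw⟩ := h2
  have hP : polygonal 5 c = w := by
    rw [polygonal, show ((5 : ℤ) - 2) * c - (5 - 4) = 3 * c - 1 by ring, hw]
    omega
  rw [hP]
  constructor
  · rintro rfl; linear_combination 12 * hw
  · intro h
    have : 24 * w = 24 * m := by linear_combination h - 12 * hw
    omega

theorem exists_polygonal_five_eq_iff (m : ℤ) :
    (∃ c, polygonal 5 c = m) ↔ ∃ x : ℤ, x ^ 2 = 24 * m + 1 := by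
  simp_rw [polygonal_five_eq_iff]
  refine ⟨fun ⟨c, hc⟩ ↦ ⟨_, hc⟩, fun ⟨x, hx⟩ ↦ ?_⟩
  -- `x` is prime to `6`, so `x ≡ ±1 (mod 6)`
  have h2 : x % 2 = 1 := by
    rcases Int.even_or_odd x with ⟨k, rfl⟩ | h
    · have : 4 * k ^ 2 = 24 * m + 1 := by linear_combination hx
      omega
    · exact Int.odd_iff.mp h
  have h3 : x % 3 ≠ 0 := by
    intro h0
    obtain ⟨k, rfl⟩ := Int.dvd_of_emod_eq_zero h0
    have : 9 * k ^ 2 = 24 * m + 1 := by linear_combination hx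
    omega
  rcases (by omega : x % 6 = 1 ∨ x % 6 = 5) with h | h
  · exact ⟨-(x / 6), by rw [show 6 * -(x / 6) - 1 = -x by omega, neg_sq, hx]⟩
  · exact ⟨x / 6 + 1, by rw [show 6 * (x / 6 + 1) - 1 = x by omega, hx]⟩

lemma exists_polygonal_five_eq_mul_iff (a b : ℤ) :
    (∃ c, polygonal 5 c = a * b) ↔
      ∃ x, 0 < x ∧ x ^ 2 + 6 * (b - a) ^ 2 = 6 * (a + b) ^ 2 + 1 := by
  rw [exists_polygonal_five_eq_iff]
  constructor
  · rintro ⟨x, hx⟩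
    refine ⟨|x|, abs_pos.mpr ?_, by rw [sq_abs]; linear_combination hx⟩
    rintro rfl
    omega
  · rintro ⟨x, -, hx⟩
    exact ⟨x, by linear_combination hx⟩

lemma isCoprime_six_mul_sq_add_one (n : ℤ) : IsCoprime (6 * n ^ 2 + 1) 6 :=
  ⟨1, -n ^ 2, by ring⟩

theorem gcd_sub_mul_gcd_add_eq {n x y : ℤ} (h : x ^ 2 + 6 * y ^ 2 = 6 * n ^ 2 + 1) :
    (Int.gcd (6 * n ^ 2 + 1) (n * x - y) : ℤ) * Int.gcd (6 * n ^ 2 + 1) (n * x + y) =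
      6 * n ^ 2 + 1 := by
  have hzw : 6 * ((n * x - y) * (n * x + y)) = (6 * n ^ 2 + 1) * (x ^ 2 - 1) := by
    linear_combination -h
  suffices key : Int.gcd (6 * n ^ 2 + 1) (n * x - y) * Int.gcd (6 * n ^ 2 + 1) (n * x + y) =
      (6 * n ^ 2 + 1).natAbs by
    rw [← Nat.cast_mul, key, Int.natCast_natAbs, abs_of_pos (by positivity)]
  apply Nat.dvd_antisymm
  · rw [← Int.natCast_dvd, Nat.cast_mul]
    have h₁ := Int.gcd_dvd_left (6 * n ^ 2 + 1) (n * x - y)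
    have h₂ := Int.gcd_dvd_left (6 * n ^ 2 + 1) (n * x + y)
    have hz := Int.gcd_dvd_right (6 * n ^ 2 + 1) (n * x - y)
    have hw := Int.gcd_dvd_right (6 * n ^ 2 + 1) (n * x + y)
    generalize Int.gcd (6 * n ^ 2 + 1) (n * x - y) = G₁ at h₁ hz ⊢
    generalize Int.gcd (6 * n ^ 2 + 1) (n * x + y) = G₂ at h₂ hw ⊢
    -- with `z = nx - y`, `w = nx + y`: `G₁ G₂` divides `N²`, `Nw`, `zN`, `zw`, and `N` is a
    -- combination of these
    rw [show 6 * n ^ 2 + 1 = x ^ 2 * ((6 * n ^ 2 + 1) * (6 * n ^ 2 + 1))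
        - 3 * n * x * ((6 * n ^ 2 + 1) * (n * x + y))
        - 3 * n * x * ((n * x - y) * (6 * n ^ 2 + 1))
        - 6 * ((n * x - y) * (n * x + y)) by linear_combination hzw]
    exact dvd_sub (dvd_sub (dvd_sub (dvd_mul_of_dvd_right (mul_dvd_mul h₁ h₂) _)
      (dvd_mul_of_dvd_right (mul_dvd_mul h₁ hw) _))
      (dvd_mul_of_dvd_right (mul_dvd_mul hz h₂) _)) (dvd_mul_of_dvd_right (mul_dvd_mul hz hw) _)
  · refine Nat.dvd_gcd_mul_gcd_iff_dvd_mul.mpr ?_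
    rw [← Int.natAbs_mul, Int.natAbs_dvd_natAbs]
    exact (isCoprime_six_mul_sq_add_one n).dvd_of_dvd_mul_left (hzw ▸ dvd_mul_right _ _)

theorem eq_of_gcd_sub_eq {n x y x' y' : ℤ} (hx : 0 < x) (hx' : 0 < x')
    (h : x ^ 2 + 6 * y ^ 2 = 6 * n ^ 2 + 1) (h' : x' ^ 2 + 6 * y' ^ 2 = 6 * n ^ 2 + 1)
    (hg : Int.gcd (6 * n ^ 2 + 1) (n * x - y) = Int.gcd (6 * n ^ 2 + 1) (n * x' - y')) :
    x = x' ∧ y = y' := by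
  have hN : (0 : ℤ) < 6 * n ^ 2 + 1 := by positivity
  have hde := gcd_sub_mul_gcd_add_eq h
  have hde' := gcd_sub_mul_gcd_add_eq h'
  rw [← hg] at hde'
  have he :
      (Int.gcd (6 * n ^ 2 + 1) (n * x + y) : ℤ) = Int.gcd (6 * n ^ 2 + 1) (n * x' + y') :=
    mul_left_cancel₀ (left_ne_zero_of_mul (hde ▸ hN.ne')) (hde.trans hde'.symm)
  have hcross : 6 * n ^ 2 + 1 ∣ x' * y - x * y' := by
    have h₁ : 6 * n ^ 2 + 1 ∣ (n * x' - y') * (n * x + y) :=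
      hde ▸ mul_dvd_mul (hg ▸ Int.gcd_dvd_right _ _) (Int.gcd_dvd_right _ _)
    have h₂ : 6 * n ^ 2 + 1 ∣ (n * x - y) * (n * x' + y') :=
      hde ▸ mul_dvd_mul (Int.gcd_dvd_right _ _) (he ▸ Int.gcd_dvd_right _ _)
    have h2n : IsCoprime (6 * n ^ 2 + 1) (2 * n) := ⟨1, -3 * n, by ring⟩
    exact h2n.dvd_of_dvd_mul_left (by convert dvd_sub h₁ h₂ using 1; ring)
  -- Brahmagupta's identity gives `6 (x' y - x y')² ≤ N²`, so this multiple of `N` vanishes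
  have hcross₀ : x' * y = x * y' := by
    obtain ⟨k, hk⟩ := hcross
    have hB : (x * x' + 6 * y * y') ^ 2 + 6 * (x' * y - x * y') ^ 2 = (6 * n ^ 2 + 1) ^ 2 := by
      linear_combination (x' ^ 2 + 6 * y' ^ 2) * h + (6 * n ^ 2 + 1) * h'
    rw [hk] at hB
    have : k = 0 := by
      by_contra hk₀
      have : 0 < k ^ 2 := by positivity
      nlinarith [sq_nonneg (x * x' + 6 * y * y'),
        mul_le_mul_of_nonneg_left (by omega : 1 ≤ k ^ 2) (sq_nonneg (6 * n ^ 2 + 1))]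
    simpa [this, sub_eq_zero] using hk
  have hxx : x = x' := by
    have : (x' ^ 2 - x ^ 2) * (6 * n ^ 2 + 1) = 0 := by
      linear_combination x ^ 2 * h' - x' ^ 2 * h + 6 * (x' * y + x * y') * hcross₀
    have := (mul_eq_zero.mp this).resolve_right hN.ne'
    exact (pow_left_inj₀ hx.le hx'.le two_ne_zero).mp (by linarith)
  subst hxx
  exact ⟨rfl, mul_left_cancel₀ hx.ne' (by linarith)⟩

lemma even_sub_of_sq_add_six_mul_sq_eq {n x y : ℤ} (h : x ^ 2 + 6 * y ^ 2 = 6 * n ^ 2 + 1) :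
    Even (y - n) := by
  have hx : Odd x :=
    (Int.odd_pow' two_ne_zero).mp ⟨3 * (n ^ 2 - y ^ 2), by linear_combination h⟩
  have h4 := Int.sq_mod_four_eq_one_of_odd hx
  have : Even (y ^ 2 - n ^ 2) := by rw [Int.even_iff]; omega
  rw [Int.even_sub, Int.even_pow' two_ne_zero, Int.even_pow' two_ne_zero] at this
  exact Int.even_sub.mpr this

lemma exists_lt_mul_succ_succ {N : ℕ} (hN : 0 < N) :
    ∃ A B : ℕ, N < (A + 1) * (B + 1) ∧ A ^ 2 < 2 * N ∧ 2 * B ^ 2 ≤ N := by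
  have hB₁ := Nat.sqrt_le' (N / 2)
  have hB₂ : N / 2 < (Nat.sqrt (N / 2) + 1) ^ 2 := Nat.lt_succ_sqrt' _
  generalize Nat.sqrt (N / 2) = B at hB₁ hB₂
  have hA₁ : N / (B + 1) * (B + 1) ≤ N := Nat.div_mul_le_self N (B + 1)
  have hA₂ : N < (N / (B + 1) + 1) * (B + 1) :=
    mul_comm (B + 1) _ ▸ Nat.lt_mul_div_succ N B.succ_pos
  generalize N / (B + 1) = A at hA₁ hA₂
  refine ⟨A, B, hA₂, ?_, by omega⟩
  have hB : N < 2 * (B + 1) ^ 2 := by omega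
  nlinarith [Nat.mul_le_mul hA₁ hA₁, Nat.mul_lt_mul_of_pos_left hB hN]

lemma exists_dvd_sub_dvd_add_of_lt {d e A B : ℕ} [NeZero d] [NeZero e] (u : ℤ)
    (h : d * e < (A + 1) * (B + 1)) :
    ∃ ξ η : ℤ, (ξ ≠ 0 ∨ η ≠ 0) ∧ |ξ| ≤ A ∧ |η| ≤ B ∧
      (d : ℤ) ∣ u * ξ - η ∧ (e : ℤ) ∣ u * ξ + η := by
  let box : Finset (ℤ × ℤ) := Icc 0 (A : ℤ) ×ˢ Icc 0 (B : ℤ)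
  have hcard : #(univ : Finset (ZMod d × ZMod e)) < #box := by
    simpa [box] using h
  obtain ⟨p, hp, q, hq, hpq, hf⟩ := exists_ne_map_eq_of_card_lt_of_maps_to hcard
    (f := fun a : ℤ × ℤ ↦
      (((u * a.1 - a.2 : ℤ) : ZMod d), ((u * a.1 + a.2 : ℤ) : ZMod e)))
    (fun _ _ ↦ mem_univ _)
  simp only [box, mem_product, mem_Icc] at hp hq
  simp only [Prod.mk.injEq, ZMod.intCast_eq_intCast_iff_dvd_sub] at hf
  refine ⟨q.1 - p.1, q.2 - p.2, ?_, abs_le.mpr ⟨by omega, by omega⟩,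
    abs_le.mpr ⟨by omega, by omega⟩, by convert hf.1 using 1; ring,
    by convert hf.2 using 1; ring⟩
  by_contra! h0
  exact hpq (Prod.ext (by omega) (by omega))

lemma sq_add_six_mul_sq_ne_two_mul (a b n : ℤ) : a ^ 2 + 6 * b ^ 2 ≠ 2 * (6 * n ^ 2 + 1) := by
  intro h
  have hmod : ∀ a b n : ZMod 3, a ^ 2 + 6 * b ^ 2 ≠ 2 * (6 * n ^ 2 + 1) := by decide
  exact hmod a b n (by exact_mod_cast congrArg (Int.cast : ℤ → ZMod 3) h)

lemma sq_add_six_mul_sq_ne_three_mul (a b n : ℤ) : a ^ 2 + 6 * b ^ 2 ≠ 3 * (6 * n ^ 2 + 1) := by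
  intro h
  have hmod : ∀ a b n : ZMod 9, a ^ 2 + 6 * b ^ 2 ≠ 3 * (6 * n ^ 2 + 1) := by decide
  exact hmod a b n (by exact_mod_cast congrArg (Int.cast : ℤ → ZMod 9) h)

lemma even_and_even_of_sq_add_six_mul_sq_eq_four_mul {a b n : ℤ}
    (h : a ^ 2 + 6 * b ^ 2 = 4 * (6 * n ^ 2 + 1)) : Even a ∧ Even b := by
  have ha : Even a := by
    have : Even (a ^ 2) := by
      rw [show a ^ 2 = 2 * (2 * (6 * n ^ 2 + 1) - 3 * b ^ 2) by linear_combination h]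
      exact even_two_mul _
    exact (Int.even_pow' two_ne_zero).mp this
  obtain ⟨c, rfl⟩ := ha
  refine ⟨⟨c, rfl⟩, (Int.even_pow' two_ne_zero).mp ?_⟩
  rw [show b ^ 2 = 2 * (6 * n ^ 2 + 1 - c ^ 2 - b ^ 2) by linarith]
  exact even_two_mul _

lemma exists_mul_rep_dvd_dvd {n : ℤ} {d e : ℕ} (hde : (d : ℤ) * e = 6 * n ^ 2 + 1) :
    ∃ ξ η k : ℤ, 0 < k ∧ k < 5 ∧ ξ ^ 2 + 6 * η ^ 2 = k * (6 * n ^ 2 + 1) ∧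
      (d : ℤ) ∣ n * ξ - η ∧ (e : ℤ) ∣ n * ξ + η := by
  have hN : (0 : ℤ) < 6 * n ^ 2 + 1 := by positivity
  have hde₀ : 0 < d * e := by exact_mod_cast hde ▸ hN
  have : NeZero d := ⟨by rintro rfl; simp at hde₀⟩
  have : NeZero e := ⟨by rintro rfl; simp at hde₀⟩
  obtain ⟨A, B, hAB, hA, hB⟩ := exists_lt_mul_succ_succ hde₀
  obtain ⟨ξ, η, hne, hξ, hη, hdξ, heξ⟩ := exists_dvd_sub_dvd_add_of_lt n hAB
  have hA' : (A : ℤ) ^ 2 < 2 * (6 * n ^ 2 + 1) := by rw [← hde]; exact_mod_cast hA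
  have hB' : 2 * (B : ℤ) ^ 2 ≤ 6 * n ^ 2 + 1 := by rw [← hde]; exact_mod_cast hB
  have hξ' : ξ ^ 2 ≤ (A : ℤ) ^ 2 := sq_le_sq' (abs_le.mp hξ).1 (abs_le.mp hξ).2
  have hη' : η ^ 2 ≤ (B : ℤ) ^ 2 := sq_le_sq' (abs_le.mp hη).1 (abs_le.mp hη).2
  have hQ : 6 * n ^ 2 + 1 ∣ ξ ^ 2 + 6 * η ^ 2 := by
    rw [show ξ ^ 2 + 6 * η ^ 2 = (6 * n ^ 2 + 1) * ξ ^ 2 - 6 * ((n * ξ - η) * (n * ξ + η)) by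
      ring]
    exact dvd_sub (dvd_mul_right _ _) (dvd_mul_of_dvd_right (hde ▸ mul_dvd_mul hdξ heξ) _)
  obtain ⟨k, hk⟩ := hQ
  have hpos : 0 < ξ ^ 2 + 6 * η ^ 2 := by
    rcases hne with h | h <;> positivity
  refine ⟨ξ, η, k, ?_, ?_, by rw [hk, mul_comm], hdξ, heξ⟩ <;> nlinarith

theorem exists_rep_dvd_dvd {n : ℤ} {d e : ℕ} (hde : (d : ℤ) * e = 6 * n ^ 2 + 1) :
    ∃ x y : ℤ, 0 < x ∧ x ^ 2 + 6 * y ^ 2 = 6 * n ^ 2 + 1 ∧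
      (d : ℤ) ∣ n * x - y ∧ (e : ℤ) ∣ n * x + y := by
  suffices h : ∃ x y : ℤ, x ^ 2 + 6 * y ^ 2 = 6 * n ^ 2 + 1 ∧
      (d : ℤ) ∣ n * x - y ∧ (e : ℤ) ∣ n * x + y by
    obtain ⟨x, y, hxy, hd, he⟩ := h
    rcases lt_trichotomy x 0 with hx | rfl | hx
    · refine ⟨-x, -y, by omega, by linear_combination hxy, ?_, ?_⟩
      · rwa [show n * -x - -y = -(n * x - y) by ring, dvd_neg]
      · rwa [show n * -x + -y = -(n * x + y) by ring, dvd_neg]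
    · omega
    · exact ⟨x, y, hx, hxy, hd, he⟩
  obtain ⟨ξ, η, k, hk₀, hk₅, hξη, hd, he⟩ := exists_mul_rep_dvd_dvd hde
  interval_cases k
  · exact ⟨ξ, η, by linear_combination hξη, hd, he⟩
  · exact absurd hξη (sq_add_six_mul_sq_ne_two_mul ξ η n)
  · exact absurd hξη (sq_add_six_mul_sq_ne_three_mul ξ η n)
  · -- `d` and `e` divide the odd number `6n² + 1`, so both survive halving `ξ` and `η`
    obtain ⟨⟨x, rfl⟩, ⟨y, rfl⟩⟩ := even_and_even_of_sq_add_six_mul_sq_eq_four_mul hξη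
    have h2 : IsCoprime (6 * n ^ 2 + 1) 2 :=
      (isCoprime_six_mul_sq_add_one n).of_isCoprime_of_dvd_right (by norm_num)
    rw [show n * (x + x) - (y + y) = (n * x - y) * 2 by ring] at hd
    rw [show n * (x + x) + (y + y) = (n * x + y) * 2 by ring] at he
    exact ⟨x, y, by linarith,
      (h2.of_isCoprime_of_dvd_left (hde ▸ dvd_mul_right _ _)).dvd_of_dvd_mul_right hd,
      (h2.of_isCoprime_of_dvd_left (hde ▸ dvd_mul_left _ _)).dvd_of_dvd_mul_right he⟩

noncomputable def reps (n : ℤ) : Finset (ℤ × ℤ) :=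
  (Icc 1 (6 * n ^ 2 + 1) ×ˢ Icc (-(6 * n ^ 2 + 1)) (6 * n ^ 2 + 1)).filter
    fun p ↦ p.1 ^ 2 + 6 * p.2 ^ 2 = 6 * n ^ 2 + 1

lemma mem_reps {n : ℤ} {p : ℤ × ℤ} :
    p ∈ reps n ↔ 0 < p.1 ∧ p.1 ^ 2 + 6 * p.2 ^ 2 = 6 * n ^ 2 + 1 := by
  simp only [reps, mem_filter, mem_product, mem_Icc]
  constructor
  · rintro ⟨⟨⟨h₁, -⟩, -⟩, h⟩
    exact ⟨h₁, h⟩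
  · rintro ⟨h₁, h⟩
    exact ⟨⟨⟨h₁, by nlinarith⟩, by nlinarith, by nlinarith⟩, h⟩

lemma eq_of_dvd_of_dvd_of_mul_eq {a b d e : ℕ} (had : d ∣ a) (hbe : e ∣ b) (h : a * b = d * e)
    (hde : 0 < d * e) : a = d := by
  have ha := Nat.le_of_dvd (Nat.pos_of_mul_pos_right (h ▸ hde)) had
  have hb := Nat.le_of_dvd (Nat.pos_of_mul_pos_left (h ▸ hde)) hbe
  nlinarith [Nat.pos_of_mul_pos_left hde]

theorem card_reps (n : ℤ) : #(reps n) = (6 * n ^ 2 + 1).natAbs.divisors.card := by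
  have hN : (0 : ℤ) < 6 * n ^ 2 + 1 := by positivity
  refine card_bij (fun p _ ↦ Int.gcd (6 * n ^ 2 + 1) (n * p.1 - p.2)) (fun p _ ↦ ?_) ?_ ?_
  · exact Nat.mem_divisors.mpr ⟨Int.gcd_dvd_natAbs_left _ _, by omega⟩
  · intro p hp q hq hpq
    rw [mem_reps] at hp hq
    obtain ⟨h₁, h₂⟩ := eq_of_gcd_sub_eq hp.1 hq.1 hp.2 hq.2 hpq
    exact Prod.ext h₁ h₂
  · intro d hd
    obtain ⟨hdN, -⟩ := Nat.mem_divisors.mp hd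
    obtain ⟨e, he⟩ := hdN
    have hde : (d : ℤ) * e = 6 * n ^ 2 + 1 := by
      rw [← Nat.cast_mul, ← he, Int.natCast_natAbs, abs_of_pos hN]
    obtain ⟨x, y, hx, hxy, hdx, hey⟩ := exists_rep_dvd_dvd hde
    refine ⟨(x, y), mem_reps.mpr ⟨hx, hxy⟩, eq_of_dvd_of_dvd_of_mul_eq
      (Int.dvd_gcd (hde ▸ dvd_mul_right _ _) hdx) (Int.dvd_gcd (hde ▸ dvd_mul_left _ _) hey)
      (by exact_mod_cast (gcd_sub_mul_gcd_add_eq hxy).trans hde.symm) (by rw [← he]; omega)⟩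

lemma mem_image_snd_reps {n y : ℤ} :
    y ∈ (reps n).image Prod.snd ↔ ∃ x, 0 < x ∧ x ^ 2 + 6 * y ^ 2 = 6 * n ^ 2 + 1 := by
  simp [mem_reps]

lemma card_image_snd_reps (n : ℤ) : #((reps n).image Prod.snd) = #(reps n) := by
  refine card_image_of_injOn fun p hp q hq (hpq : p.2 = q.2) ↦ Prod.ext ?_ hpq
  rw [mem_coe, mem_reps] at hp hq
  exact (pow_left_inj₀ hp.1.le hq.1.le two_ne_zero).mp (by rw [← hpq] at hq; linarith)

lemma card_filter_abs_lt_add_two {n : ℤ} (hn : 0 < n) :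
    #(((reps n).image Prod.snd).filter (|·| < n)) + 2 = #((reps n).image Prod.snd) := by
  have hfar : ((reps n).image Prod.snd).filter (¬|·| < n) = {n, -n} := by
    ext y
    simp only [mem_filter, mem_image_snd_reps, mem_insert, mem_singleton, not_lt]
    constructor
    · rintro ⟨⟨x, hx, h⟩, hy⟩
      have : |y| ≤ n := by
        rw [← abs_of_pos hn, ← sq_le_sq]
        nlinarith
      exact (abs_eq hn.le).mp (le_antisymm this hy)
    · rintro (rfl | rfl) <;> exact ⟨⟨1, one_pos, by ring⟩, by simp [abs_of_pos hn]⟩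
  have := card_filter_add_card_filter_not (s := (reps n).image Prod.snd) (|·| < n)
  rwa [hfar, card_pair (by omega)] at this

lemma two_mul_card_filter_nonneg {α : Type*} [AddCommGroup α] [LinearOrder α]
    [IsOrderedAddMonoid α] (s : Finset α) (hs : ∀ y ∈ s, -y ∈ s) :
    2 * #(s.filter (0 ≤ ·)) = #s + #(s.filter (· = 0)) := by
  have hneg : #(s.filter (· ≤ 0)) = #(s.filter (0 ≤ ·)) :=
    card_nbij' (fun y ↦ -y) (fun y ↦ -y) (fun y hy ↦ by simp_all) (fun y hy ↦ by simp_all)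
      (fun y _ ↦ neg_neg y) (fun y _ ↦ neg_neg y)
  have hunion : s.filter (0 ≤ ·) ∪ s.filter (· ≤ 0) = s := by
    rw [← filter_or]; exact filter_true_of_mem fun y _ ↦ le_total 0 y
  have hinter : s.filter (0 ≤ ·) ∩ s.filter (· ≤ 0) = s.filter (· = 0) := by
    rw [← filter_and]; exact filter_congr fun y _ ↦ by rw [and_comm, ← le_antisymm_iff]
  have := card_union_add_card_inter (s.filter (0 ≤ ·)) (s.filter (· ≤ 0))
  rw [hunion, hinter, hneg] at this
  omega

theorem rmt_five_one_eq_card (n : ℕ) :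
    rmt 5 1 n = #(((reps n).image Prod.snd).filter (fun y : ℤ ↦ 0 ≤ y ∧ y < n)) := by
  rw [rmt, ← Set.ncard_coe_finset]
  refine Set.ncard_congr (fun p _ ↦ (p.2 : ℤ) - p.1) ?_ ?_ ?_
  · rintro ⟨a, b⟩ ⟨ha, hab, rfl, c, -, hc⟩
    rw [Nat.cast_one, one_mul] at hc
    obtain ⟨x, hx, hxy⟩ := (exists_polygonal_five_eq_mul_iff a b).mp ⟨c, hc.symm⟩
    simp only [coe_filter, mem_image, mem_reps, Set.mem_ofPred_eq]
    exact ⟨⟨(x, _), ⟨hx, by push_cast; linear_combination hxy⟩, rfl⟩,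
      by omega, by omega⟩
  · rintro ⟨a, b⟩ ⟨a', b'⟩ ⟨-, -, rfl, -⟩ ⟨-, -, hn, -⟩ h
    simp only at h
    ext <;> omega
  · intro y hy
    simp only [coe_filter, mem_image, mem_reps, Set.mem_ofPred_eq] at hy
    obtain ⟨⟨⟨x, y⟩, ⟨hx, hxy⟩, rfl⟩, hy₀, hyn⟩ := hy
    obtain ⟨r, hr⟩ := even_sub_of_sq_add_six_mul_sq_eq hxy
    obtain ⟨a, ha⟩ := Int.eq_ofNat_of_zero_le (by omega : 0 ≤ -r)
    obtain ⟨b, hb⟩ := Int.eq_ofNat_of_zero_le (by omega : 0 ≤ n + r)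
    obtain ⟨c, hc⟩ := (exists_polygonal_five_eq_mul_iff a b).mpr
      ⟨x, hx, by rwa [show (b : ℤ) - a = y by omega, show (a : ℤ) + b = n by omega]⟩
    exact ⟨(a, b), ⟨by omega, by omega, by omega, c, fun h ↦ absurd h (by decide),
      by simpa using hc.symm⟩, by simp only; omega⟩

theorem stmt_5 (n : ℕ) (hn : 0 < n) :
    rmt 5 1 n = ((6 * n ^ 2 + 1).divisors.card - 1) / 2 := by
  rw [rmt_five_one_eq_card]
  have hfar := card_filter_abs_lt_add_two (n := n) (by exact_mod_cast hn)
  set Y := (reps n).image Prod.snd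
  have hsymm : ∀ y ∈ Y.filter (|·| < (n : ℤ)), -y ∈ Y.filter (|·| < (n : ℤ)) := by
    simp_rw [mem_filter, Y, mem_image_snd_reps, neg_sq, abs_neg]; exact fun _ ↦ id
  have hcount := two_mul_card_filter_nonneg _ hsymm
  have hzero : #((Y.filter (|·| < (n : ℤ))).filter (· = 0)) ≤ 1 :=
    card_le_one.mpr fun a ha b hb ↦ by simp_all
  have hnonneg : (Y.filter (|·| < (n : ℤ))).filter (0 ≤ ·) =
      Y.filter (fun y ↦ 0 ≤ y ∧ y < (n : ℤ)) := by
    rw [filter_filter]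
    exact filter_congr fun y _ ↦ by rw [abs_lt]; omega
  have hY : #Y = (6 * n ^ 2 + 1).divisors.card := by
    rw [card_image_snd_reps, card_reps]
    norm_cast
  rw [hnonneg] at hcount
  omega
end

section
/- For every positive integer n, r_{3,29}(n) = ⌊(d_{{29}}(2n² + 29) - 1)/2⌋. -/
/-!
Put `N = 2 n² + 29` and let `K` be its `29`-free part. A pair counted by `r_{3,29}(n)` is the same
as a solution of `2 x² + 29 y² = N` with `0 ≤ x < n`, `y > 0`, and the solutions with `y > 0`
correspond bijectively to the divisors of `K` via `(x, y) ↦ gcd (x - n y, K)`.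

Injectivity: equal gcds force `N ∣ x y' - x' y`, while
`(2 x x' + 29 y y')² + 58 (x y' - x' y)² = N²`, so `x y' = x' y`.

Surjectivity: for `δ ∣ K` write `K = f A · f B` with `δ = f A` and `A, B` coprime. Then
`M = N / f²` divides `s² + 58` for some `s ≡ -2n (mod A)`, `s ≡ 2n (mod B)`, so the form
`(M, 2 s, (s² + 58) / M)` of discriminant `-232` is equivalent to `x² + 58 y²` or `2 x² + 29 y²`.
The first is impossible mod 8; the second gives `M = 2 α² + 29 γ²` with `A ∣ α - n γ` and
`B ∣ α + n γ`, and `(f α, f γ)` is a solution with gcd `δ`.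

The reflection `x ↦ -x` and the solution `(n, 1)` then turn `d_{29}(N)` into `r_{3,29}(n)`.
-/

open scoped MatrixGroups
open ModularGroup

@[ext]
structure BinaryQuadForm where
  a : ℤ
  b : ℤ
  c : ℤ

namespace BinaryQuadForm

variable (Q : BinaryQuadForm)

def eval (x y : ℤ) : ℤ := Q.a * x ^ 2 + Q.b * x * y + Q.c * y ^ 2

def disc : ℤ := Q.b ^ 2 - 4 * Q.a * Q.c

/-- The form `(x, y) ↦ Q (g₀₀ x + g₀₁ y, g₁₀ x + g₁₁ y)`. -/
def act (g : SL(2, ℤ)) : BinaryQuadForm where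
  a := Q.eval (g 0 0) (g 1 0)
  b := 2 * Q.a * g 0 0 * g 0 1 + Q.b * (g 0 0 * g 1 1 + g 0 1 * g 1 0) + 2 * Q.c * g 1 0 * g 1 1
  c := Q.eval (g 0 1) (g 1 1)

@[simp]
lemma act_one : Q.act 1 = Q := by
  ext <;> simp [act, eval]

lemma act_mul (g h : SL(2, ℤ)) : Q.act (g * h) = (Q.act g).act h := by
  ext <;> simp [act, eval, Matrix.mul_apply, Fin.sum_univ_two] <;> ring

lemma disc_act (g : SL(2, ℤ)) : (Q.act g).disc = Q.disc := by
  have hg := g.det_coe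
  rw [Matrix.det_fin_two] at hg
  simp only [disc, act, eval]
  linear_combination (g 0 0 * g 1 1 - g 0 1 * g 1 0 + 1) * (Q.b ^ 2 - 4 * Q.a * Q.c) * hg

lemma act_T_zpow (k : ℤ) :
    Q.act (T ^ k) = ⟨Q.a, Q.b + 2 * Q.a * k, Q.a * k ^ 2 + Q.b * k + Q.c⟩ := by
  ext <;> simp [act, eval, coe_T_zpow]
  ring

lemma act_S : Q.act S = ⟨Q.c, -Q.b, Q.a⟩ := by
  ext <;> simp [act, eval, coe_S]

def IsReduced : Prop := |Q.b| ≤ Q.a ∧ Q.a ≤ Q.c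

lemma exists_isReduced_act (ha : 0 < Q.a) (hd : Q.disc < 0) : ∃ g, (Q.act g).IsReduced := by
  induction hm : Q.a.toNat using Nat.strong_induction_on generalizing Q with
  | _ m ih =>
  set k := -((Q.b + Q.a) / (2 * Q.a))
  set Q' := Q.act (T ^ k) with hQ'
  have hb : |Q'.b| ≤ Q'.a := by
    have h := Int.mul_ediv_add_emod (Q.b + Q.a) (2 * Q.a)
    have h0 := Int.emod_nonneg (Q.b + Q.a) (by omega : 2 * Q.a ≠ 0)
    have h1 := Int.emod_lt_of_pos (Q.b + Q.a) (by omega : 0 < 2 * Q.a)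
    rw [hQ', act_T_zpow, abs_le]
    constructor <;> linarith
  have hd' : Q'.disc < 0 := by rwa [hQ', disc_act]
  have hc' : 0 < Q'.c := by
    have ha' : Q'.a = Q.a := by rw [hQ', act_T_zpow]
    unfold disc at hd'
    nlinarith [sq_nonneg Q'.b]
  rcases le_or_gt Q'.a Q'.c with hac | hca
  · exact ⟨T ^ k, hb, hac⟩
  · have hlt : (Q'.act S).a.toNat < m := by simp [act_S, hQ', act_T_zpow] at hca ⊢; omega
    obtain ⟨g, hg⟩ := ih _ hlt (Q'.act S) (by rwa [act_S]) (by rwa [disc_act]) rfl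
    exact ⟨T ^ k * S * g, by rwa [act_mul, act_mul]⟩

lemma IsReduced.eq_of_disc_eq_neg_232 {Q : BinaryQuadForm} (hQ : Q.IsReduced) (hd : Q.disc = -232) :
    Q = ⟨1, 0, 58⟩ ∨ Q = ⟨2, 0, 29⟩ := by
  obtain ⟨hb, hac⟩ := hQ
  obtain ⟨hb₁, hb₂⟩ := abs_le.mp hb
  unfold disc at hd
  have ha₀ : 0 ≤ Q.a := by linarith
  have ha : Q.a ≤ 8 := by nlinarith
  obtain ⟨a, b, c⟩ := Q
  simp only [BinaryQuadForm.mk.injEq] at *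
  interval_cases a <;> interval_cases b <;> omega

end BinaryQuadForm

open BinaryQuadForm in
/-- The form `M x² + 2 s x y + ((s² + 58) / M) y²` has discriminant `-232`, so it is equivalent to
one of the two reduced forms `x² + 58 y²`, `2 x² + 29 y²`. -/
lemma exists_rep_of_dvd_sq_add_58 {M s : ℤ} (hM : 0 < M) (hs : M ∣ s ^ 2 + 58) :
    (∃ p r, M = p ^ 2 + 58 * r ^ 2) ∨
      ∃ α γ, IsCoprime α γ ∧ 2 * α ^ 2 + 29 * γ ^ 2 = M ∧ M ∣ s * γ + 2 * α := by
  obtain ⟨k, hk⟩ := hs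
  set Q : BinaryQuadForm := ⟨M, 2 * s, k⟩
  obtain ⟨g, hg⟩ := Q.exists_isReduced_act hM (by simp only [disc, Q]; linarith)
  have hQ : Q = (Q.act g).act g⁻¹ := by rw [← act_mul, mul_inv_cancel, act_one]
  have hdet := g⁻¹.det_coe
  rw [Matrix.det_fin_two] at hdet
  rcases hg.eq_of_disc_eq_neg_232 (by rw [disc_act]; simp only [disc, Q]; linarith) with h | h <;>
    rw [h] at hQ <;> simp only [Q, act, eval, BinaryQuadForm.mk.injEq] at hQ
  · exact .inl ⟨g⁻¹ 0 0, g⁻¹ 1 0, by linarith⟩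
  · have hs : s = 2 * g⁻¹ 0 0 * g⁻¹ 0 1 + 29 * g⁻¹ 1 0 * g⁻¹ 1 1 := by linarith
    refine .inr ⟨g⁻¹ 0 0, g⁻¹ 1 0, ⟨g⁻¹ 1 1, -g⁻¹ 0 1, by linear_combination hdet⟩, by linarith,
      g⁻¹ 1 1, ?_⟩
    linear_combination g⁻¹ 1 0 * hs - g⁻¹ 1 1 * hQ.1 - 2 * g⁻¹ 0 0 * hdet

lemma Nat.divisors_filter_not_dvd {p m : ℕ} (hp : p.Prime) (hm : m ≠ 0) :
    m.divisors.filter (¬ p ∣ ·) = (ordCompl[p] m).divisors := by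
  ext d
  simp only [Finset.mem_filter, Nat.mem_divisors]
  refine ⟨fun ⟨⟨hd, _⟩, hpd⟩ => ⟨Nat.dvd_ordCompl_of_dvd_not_dvd hd hpd, ?_⟩,
    fun ⟨hd, _⟩ => ⟨⟨hd.trans (Nat.ordCompl_dvd m p), hm⟩, fun hpd => ?_⟩⟩
  · exact (Nat.ordCompl_pos p hm).ne'
  · exact Nat.not_dvd_ordCompl hp hm (hpd.trans hd)

lemma dvd_mul_of_gcd_eq {K v v' w' : ℤ} (h : K ∣ v' * w') (hg : Int.gcd v K = Int.gcd v' K) :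
    K ∣ v * w' := by
  have hK : K ∣ (Int.gcd v' K : ℤ) * w' := by
    rw [Int.coe_gcd, gcd_comm]
    exact dvd_gcd_mul_of_dvd_mul h
  exact hK.trans (mul_dvd_mul_right (hg ▸ Int.gcd_dvd_left v K) w')

lemma sq_add_58_mul_sq_ne (x y n : ℤ) : x ^ 2 + 58 * y ^ 2 ≠ 2 * n ^ 2 + 29 := by
  intro h
  have key : ∀ a b c : ZMod 8, a ^ 2 + 58 * b ^ 2 ≠ 2 * c ^ 2 + 29 := by decide
  exact key x y n (by exact_mod_cast congrArg (Int.cast : ℤ → ZMod 8) h)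

lemma isCoprime_two_of_dvd_two_sq_add {n A : ℤ} (hA : A ∣ 2 * n ^ 2 + 29) : IsCoprime 2 A :=
  IsCoprime.of_isCoprime_of_dvd_right ⟨-(n ^ 2 + 14), 1, by ring⟩ hA

lemma odd_of_two_sq_add {n x y : ℤ} (h : 2 * x ^ 2 + 29 * y ^ 2 = 2 * n ^ 2 + 29) : Odd y := by
  have : Odd (29 * y ^ 2) := by
    rw [show 29 * y ^ 2 = 2 * (n ^ 2 - x ^ 2) + 29 by linarith]
    exact ⟨n ^ 2 - x ^ 2 + 14, by ring⟩
  exact (Int.odd_pow.mp (Int.odd_mul.mp this).2).resolve_right two_ne_zero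

lemma two_dvd_sub_of_two_sq_add {n x y : ℤ} (h : 2 * x ^ 2 + 29 * y ^ 2 = 2 * n ^ 2 + 29) :
    2 ∣ n - x := by
  obtain ⟨c, rfl⟩ := odd_of_two_sq_add h
  have : Even (n ^ 2 - x ^ 2) := ⟨29 * c * (c + 1), by linarith⟩
  exact (show Even (n - x) by simpa [Int.even_sub, Int.even_pow] using this).two_dvd

lemma dvd_sub_mul_add {n x y K : ℤ} (h : 2 * x ^ 2 + 29 * y ^ 2 = 2 * n ^ 2 + 29)
    (hK : K ∣ 2 * n ^ 2 + 29) : K ∣ (x - n * y) * (x + n * y) := by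
  refine (isCoprime_two_of_dvd_two_sq_add hK).symm.dvd_of_dvd_mul_left ?_
  rw [show 2 * ((x - n * y) * (x + n * y)) = (2 * n ^ 2 + 29) * (1 - y ^ 2) by linear_combination h]
  exact hK.mul_right _

lemma mul_eq_mul_of_dvd_sub {N x y x' y' : ℤ} (h : 2 * x ^ 2 + 29 * y ^ 2 = N)
    (h' : 2 * x' ^ 2 + 29 * y' ^ 2 = N) (hN : N ∣ x * y' - x' * y) : x * y' = x' * y := by
  obtain ⟨k, hk⟩ := hN
  have hid : (2 * x * x' + 29 * y * y') ^ 2 + 58 * (x * y' - x' * y) ^ 2 = N ^ 2 := by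
    rw [sq N]; nth_rw 1 [← h]; rw [← h']; ring
  rcases eq_or_ne k 0 with rfl | hk0
  · linarith
  · have : 0 < k ^ 2 := by positivity
    rw [hk] at hid
    nlinarith [sq_nonneg (2 * x * x' + 29 * y * y'), sq_nonneg N]

lemma eq_or_eq_neg_of_mul_eq_mul {x y x' y' : ℤ} (hy : y ≠ 0)
    (h : 2 * x ^ 2 + 29 * y ^ 2 = 2 * x' ^ 2 + 29 * y' ^ 2) (hc : x * y' = x' * y) :
    (x', y') = (x, y) ∨ (x', y') = (-x, -y) := by
  have hpos : 0 < 2 * x ^ 2 + 29 * y ^ 2 := by positivity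
  have hyy : y' ^ 2 = y ^ 2 := by
    refine mul_right_cancel₀ hpos.ne' ?_
    linear_combination -y ^ 2 * h + 2 * (x * y' + x' * y) * hc
  rcases sq_eq_sq_iff_eq_or_eq_neg.mp hyy with rfl | rfl
  · exact .inl (Prod.ext (mul_right_cancel₀ hy hc.symm) rfl)
  · exact .inr (Prod.ext (mul_right_cancel₀ hy (by linarith)) rfl)

lemma exists_rep_dvd_sub_dvd_add {n A B : ℤ} (hA : A ∣ 2 * n ^ 2 + 29)
    (hB : B ∣ 2 * n ^ 2 + 29) (hAB : IsCoprime A B) (hpos : 0 < A * B)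
    (hM : ¬ ∃ p r, A * B = p ^ 2 + 58 * r ^ 2) :
    ∃ α γ, IsCoprime α γ ∧ 2 * α ^ 2 + 29 * γ ^ 2 = A * B ∧
      A ∣ α - n * γ ∧ B ∣ α + n * γ := by
  obtain ⟨u, v, huv⟩ := hAB
  set s := 2 * n * (u * A - v * B)
  have hsA : A ∣ s + 2 * n := ⟨4 * n * u, by linear_combination -2 * n * huv⟩
  have hsB : B ∣ s - 2 * n := ⟨-(4 * n * v), by linear_combination 2 * n * huv⟩
  have hs : s ^ 2 + 58 = (s + 2 * n) * (s - 2 * n) + 2 * (2 * n ^ 2 + 29) := by ring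
  have hAB : A * B ∣ s ^ 2 + 58 := by
    refine IsCoprime.mul_dvd ⟨u, v, huv⟩ ?_ ?_ <;> rw [hs]
    · exact dvd_add (hsA.mul_right _) (hA.mul_left 2)
    · exact dvd_add (hsB.mul_left _) (hB.mul_left 2)
  obtain ⟨α, γ, hαγ, hrep, hdvd⟩ := (exists_rep_of_dvd_sq_add_58 hpos hAB).resolve_left hM
  refine ⟨α, γ, hαγ, hrep, ?_, ?_⟩
  · refine (isCoprime_two_of_dvd_two_sq_add hA).symm.dvd_of_dvd_mul_left ?_
    rw [show 2 * (α - n * γ) = s * γ + 2 * α - (s + 2 * n) * γ by ring]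
    exact dvd_sub ((dvd_mul_right A B).trans hdvd) (hsA.mul_right γ)
  · refine (isCoprime_two_of_dvd_two_sq_add hB).symm.dvd_of_dvd_mul_left ?_
    rw [show 2 * (α + n * γ) = s * γ + 2 * α - (s - 2 * n) * γ by ring]
    exact dvd_sub ((dvd_mul_left B A).trans hdvd) (hsB.mul_right γ)

lemma not_prime_dvd_sub_and_add {n α γ p : ℤ} (hαγ : IsCoprime α γ) (hp : Prime p)
    (hpn : ¬ p ∣ 2 * n) (hv : p ∣ α - n * γ) (hw : p ∣ α + n * γ) : False := by
  have hpα : p ∣ 2 * α := by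
    rw [show 2 * α = (α + n * γ) + (α - n * γ) by ring]; exact dvd_add hw hv
  have hpγ : p ∣ 2 * n * γ := by
    rw [show 2 * n * γ = (α + n * γ) - (α - n * γ) by ring]; exact dvd_sub hw hv
  refine hp.not_isUnit (hαγ.isUnit_of_dvd' ?_ ?_)
  · exact (hp.dvd_or_dvd hpα).resolve_left fun hp2 => hpn (dvd_mul_of_dvd_left hp2 n)
  · exact (hp.dvd_or_dvd hpγ).resolve_left hpn

lemma isCoprime_of_two_sq_add_eq {n α γ f P A B u : ℤ} (hαγ : IsCoprime α γ)
    (hM : 2 * α ^ 2 + 29 * γ ^ 2 = P * A * B) (hN : 2 * n ^ 2 + 29 = f ^ 2 * (P * A * B))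
    (hu : α - n * γ = A * u) (hB : B ∣ α + n * γ) (hn : IsCoprime (2 * n) (f * A * (f * B)))
    (hP : IsCoprime P (f * A * (f * B))) : IsCoprime u (f * B) := by
  have hne : f ^ 2 * (P * A * B) ≠ 0 := by rw [← hN]; positivity
  obtain ⟨hf, hPA, hB0⟩ : f ≠ 0 ∧ P * A ≠ 0 ∧ B ≠ 0 := by simp_all
  refine isCoprime_of_prime_dvd (fun h0 => mul_ne_zero hf hB0 h0.2) fun p hp hpu hpfB => ?_
  suffices hpB : p ∣ B by
    refine not_prime_dvd_sub_and_add hαγ hp (fun hpn => hp.not_isUnit ?_)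
      (hu ▸ dvd_mul_of_dvd_right hpu A) (hpB.trans hB)
    exact hn.isUnit_of_dvd' hpn (dvd_mul_of_dvd_right (dvd_mul_of_dvd_right hpB f) _)
  rcases hp.dvd_or_dvd hpfB with hpf | hpB
  · have hPB : p ∣ P * B := by
      obtain ⟨u', rfl⟩ := hpu
      have key : 2 * (p * u') * (α + n * γ) = P * B * (1 - f ^ 2 * γ ^ 2) := by
        refine mul_left_cancel₀ (right_ne_zero_of_mul hPA) ?_
        linear_combination (-2 * (α + n * γ)) * hu + hM - γ ^ 2 * hN
      have h1 : p ∣ P * B * (1 - f ^ 2 * γ ^ 2) :=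
        key ▸ dvd_mul_of_dvd_left (dvd_mul_of_dvd_right (dvd_mul_right p u') 2) _
      have h2 : p ∣ P * B * (f ^ 2 * γ ^ 2) :=
        dvd_mul_of_dvd_right (dvd_mul_of_dvd_left (dvd_pow hpf two_ne_zero) _) _
      simpa [← mul_add] using dvd_add h1 h2
    refine (hp.dvd_or_dvd hPB).resolve_left fun hpP => hp.not_isUnit ?_
    exact hP.isUnit_of_dvd' hpP (dvd_mul_of_dvd_left (dvd_mul_of_dvd_left hpf A) _)
  · exact hpB

lemma not_sq_29_dvd_two_sq_add (n : ℕ) : ¬ 29 ^ 2 ∣ 2 * n ^ 2 + 29 := by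
  intro h
  have h29 : 29 ∣ 2 * n ^ 2 :=
    (Nat.dvd_add_left (dvd_refl 29)).mp ((dvd_pow_self 29 two_ne_zero).trans h)
  obtain ⟨m, rfl⟩ : 29 ∣ n := Nat.Prime.dvd_of_dvd_pow (by norm_num)
    (((Nat.Prime.dvd_mul (by norm_num)).mp h29).resolve_left (by norm_num))
  have : 29 ^ 2 ∣ 29 := (Nat.dvd_add_right ⟨2 * m ^ 2, by ring⟩).mp h
  norm_num at this

abbrev primeTo29Part (n : ℕ) : ℕ := ordCompl[29] (2 * n ^ 2 + 29)

lemma ordProj_dvd_29 (n : ℕ) : ordProj[29] (2 * n ^ 2 + 29) ∣ 29 := by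
  have he : (2 * n ^ 2 + 29).factorization 29 ≤ 1 := by
    by_contra! he
    exact not_sq_29_dvd_two_sq_add n ((pow_dvd_pow 29 he).trans (Nat.ordProj_dvd _ _))
  simpa using pow_dvd_pow 29 he

lemma coprime_ordProj_primeTo29Part (n : ℕ) :
    Nat.Coprime (ordProj[29] (2 * n ^ 2 + 29)) (primeTo29Part n) :=
  (Nat.coprime_ordCompl (by norm_num) (by positivity)).pow_left _

lemma isCoprime_two_mul_primeTo29Part (n : ℕ) : IsCoprime (2 * n : ℤ) (primeTo29Part n) := by
  rw [← Nat.cast_ofNat, ← Nat.cast_mul, Nat.isCoprime_iff_coprime]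
  set d := Nat.gcd (2 * n) (primeTo29Part n)
  have hdN : d ∣ 2 * n ^ 2 + 29 := (Nat.gcd_dvd_right _ _).trans (Nat.ordCompl_dvd _ _)
  have hd29 : d ∣ 29 := by
    refine (Nat.dvd_add_right ?_).mp hdN
    exact (Nat.gcd_dvd_left _ _).trans ⟨n, by ring⟩
  rcases (Nat.dvd_prime (by norm_num)).mp hd29 with h | h
  · exact h
  · have h29 : 29 ∣ primeTo29Part n := h ▸ Nat.gcd_dvd_right _ _
    exact absurd h29 (Nat.not_dvd_ordCompl (by norm_num) (by positivity))

lemma ordProj_dvd_of_two_sq_add {n : ℕ} {x y : ℤ}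
    (h : 2 * x ^ 2 + 29 * y ^ 2 = 2 * n ^ 2 + 29) :
    ((ordProj[29] (2 * n ^ 2 + 29) : ℕ) : ℤ) ∣ x := by
  rcases (Nat.dvd_prime (by norm_num)).mp (ordProj_dvd_29 n) with h1 | h29
  · simp [h1]
  · have hp : Prime (29 : ℤ) := Int.prime_iff_natAbs_prime.mpr (by norm_num)
    have hN : (29 : ℤ) ∣ 2 * n ^ 2 + 29 := by
      exact_mod_cast h29 ▸ Nat.ordProj_dvd (2 * n ^ 2 + 29) 29
    have h2x : (29 : ℤ) ∣ 2 * x ^ 2 := by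
      rw [show 2 * x ^ 2 = 2 * n ^ 2 + 29 - 29 * y ^ 2 by linarith]
      exact dvd_sub hN (dvd_mul_right _ _)
    rw [h29]
    exact hp.dvd_of_dvd_pow ((hp.dvd_or_dvd h2x).resolve_left (by norm_num))

theorem rep_eq_or_eq_neg_of_gcd_eq {n : ℕ} {x y x' y' : ℤ}
    (h : 2 * x ^ 2 + 29 * y ^ 2 = 2 * n ^ 2 + 29) (h' : 2 * x' ^ 2 + 29 * y' ^ 2 = 2 * n ^ 2 + 29)
    (hg : Int.gcd (x - n * y) (primeTo29Part n) = Int.gcd (x' - n * y') (primeTo29Part n)) :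
    (x', y') = (x, y) ∨ (x', y') = (-x, -y) := by
  have hK : (primeTo29Part n : ℤ) ∣ 2 * n ^ 2 + 29 := by exact_mod_cast Nat.ordCompl_dvd _ _
  have hKC : (primeTo29Part n : ℤ) ∣ x * y' - x' * y := by
    refine (isCoprime_two_mul_primeTo29Part n).symm.dvd_of_dvd_mul_left ?_
    rw [show 2 * n * (x * y' - x' * y) = (x - n * y) * (x' + n * y') - (x' - n * y') * (x + n * y)
      by ring]
    exact dvd_sub (dvd_mul_of_gcd_eq (dvd_sub_mul_add h' hK) hg)
      (dvd_mul_of_gcd_eq (dvd_sub_mul_add h hK) hg.symm)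
  have hPC : ((ordProj[29] (2 * n ^ 2 + 29) : ℕ) : ℤ) ∣ x * y' - x' * y :=
    dvd_sub ((ordProj_dvd_of_two_sq_add h).mul_right _) ((ordProj_dvd_of_two_sq_add h').mul_right _)
  have hNC : (2 * n ^ 2 + 29 : ℤ) ∣ x * y' - x' * y := by
    have := (Nat.isCoprime_iff_coprime.mpr (coprime_ordProj_primeTo29Part n)).mul_dvd hPC hKC
    rwa [← Nat.cast_mul, Nat.ordProj_mul_ordCompl_eq_self] at this
  obtain ⟨c, hc⟩ := odd_of_two_sq_add h
  exact eq_or_eq_neg_of_mul_eq_mul (by omega) (h.trans h'.symm) (mul_eq_mul_of_dvd_sub h h' hNC)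

theorem exists_rep_gcd_eq {n δ : ℕ} (hδ : δ ∣ primeTo29Part n) :
    ∃ x y : ℤ, 2 * x ^ 2 + 29 * y ^ 2 = 2 * n ^ 2 + 29 ∧
      Int.gcd (x - n * y) (primeTo29Part n) = δ := by
  obtain ⟨δ', hK⟩ := hδ
  obtain ⟨A, B, hAB, hA, hB⟩ := Nat.exists_coprime δ δ'
  set f := Nat.gcd δ δ'
  set P := ordProj[29] (2 * n ^ 2 + 29)
  have hKf : primeTo29Part n = f * A * (f * B) := by
    rw [hK, hA, hB]; ring
  have hKZ : (primeTo29Part n : ℤ) = f * A * (f * B) := by exact_mod_cast hKf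
  have hN : (2 * n ^ 2 + 29 : ℤ) = f ^ 2 * (P * A * B) := by
    have h := Nat.ordProj_mul_ordCompl_eq_self (2 * n ^ 2 + 29) 29
    rw [← primeTo29Part, hKf] at h
    have hZ : ((P * (f * A * (f * B)) : ℕ) : ℤ) = 2 * n ^ 2 + 29 := by exact_mod_cast h
    push_cast at hZ
    linear_combination -hZ
  have hPK : IsCoprime (P : ℤ) (f * A * (f * B)) :=
    hKZ ▸ Nat.isCoprime_iff_coprime.mpr (coprime_ordProj_primeTo29Part n)
  have hPAB : IsCoprime ((P : ℤ) * A) B :=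
    (hPK.of_isCoprime_of_dvd_right (dvd_mul_of_dvd_right (dvd_mul_left _ _) _)).mul_left
      (Nat.isCoprime_iff_coprime.mpr hAB)
  have hpos : (0 : ℤ) < P * A * B :=
    pos_of_mul_pos_right (hN ▸ by positivity) (sq_nonneg (f : ℤ))
  obtain ⟨α, γ, hαγ, hrep, hαA, hαB⟩ := exists_rep_dvd_sub_dvd_add (n := n) (A := P * A) (B := B)
    ⟨f ^ 2 * B, by rw [hN]; ring⟩ ⟨f ^ 2 * P * A, by rw [hN]; ring⟩ hPAB hpos fun ⟨p, r, hpr⟩ =>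
      sq_add_58_mul_sq_ne (f * p) (f * r) n (by linear_combination -hN - f ^ 2 * hpr)
  obtain ⟨u, hu⟩ := dvd_of_mul_left_dvd hαA
  have hcop := isCoprime_of_two_sq_add_eq hαγ hrep hN hu hαB
    (hKZ ▸ isCoprime_two_mul_primeTo29Part n) hPK
  refine ⟨f * α, f * γ, by linear_combination f ^ 2 * hrep - hN, ?_⟩
  rw [hKZ, show f * α - n * (f * γ) = f * A * u by linear_combination f * hu, Int.gcd_mul_left,
    Int.isCoprime_iff_gcd_eq_one.mp hcop, mul_one, hA, ← Nat.cast_mul, Int.natAbs_natCast,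
    mul_comm]

def posReps (n : ℕ) : Set (ℤ × ℤ) :=
  {v | 2 * v.1 ^ 2 + 29 * v.2 ^ 2 = 2 * n ^ 2 + 29 ∧ 0 < v.2}

theorem bijOn_gcd_posReps (n : ℕ) :
    Set.BijOn (fun v : ℤ × ℤ => Int.gcd (v.1 - n * v.2) (primeTo29Part n)) (posReps n)
      (primeTo29Part n).divisors := by
  refine ⟨fun v _ => ?_, fun v hv w hw hvw => ?_, fun δ hδ => ?_⟩
  · exact Nat.mem_divisors.mpr ⟨Int.natCast_dvd_natCast.mp (Int.gcd_dvd_right _ _),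
      (Nat.ordCompl_pos 29 (by positivity)).ne'⟩
  · rcases rep_eq_or_eq_neg_of_gcd_eq hv.1 hw.1 hvw with h | h
    · exact h.symm
    · have := hw.2; have := hv.2; simp only [Prod.ext_iff] at h; omega
  · obtain ⟨x, y, h, hg⟩ := exists_rep_gcd_eq (Nat.dvd_of_mem_divisors hδ)
    obtain ⟨c, rfl⟩ := odd_of_two_sq_add h
    rcases lt_or_gt_of_ne (show 2 * c + 1 ≠ 0 by omega) with hy | hy
    · refine ⟨(-x, -(2 * c + 1)), ⟨by linear_combination h, by omega⟩, ?_⟩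
      dsimp only
      rw [show -x - n * -(2 * c + 1) = -(x - n * (2 * c + 1)) by ring, Int.neg_gcd, hg]
    · exact ⟨(x, 2 * c + 1), ⟨h, hy⟩, hg⟩

lemma dA_29_eq_card_divisors (n : ℕ) :
    dA {29} (2 * n ^ 2 + 29) = (primeTo29Part n).divisors.card := by
  rw [dA, ← Nat.divisors_filter_not_dvd (by norm_num) (by positivity)]
  simp

lemma ncard_posReps (n : ℕ) : (posReps n).ncard = dA {29} (2 * n ^ 2 + 29) := by
  rw [dA_29_eq_card_divisors, (bijOn_gcd_posReps n).ncard_eq, Set.ncard_coe_finset]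

lemma finite_posReps (n : ℕ) : (posReps n).Finite :=
  .of_finite_image ((bijOn_gcd_posReps n).image_eq ▸ Finset.finite_toSet _)
    (bijOn_gcd_posReps n).injOn

lemma two_mul_ncard_fst_nonneg (n : ℕ) :
    2 * {v ∈ posReps n | 0 ≤ v.1}.ncard =
      (posReps n).ncard + {v ∈ posReps n | v.1 = 0}.ncard := by
  set σ : ℤ × ℤ ≃ ℤ × ℤ := (Equiv.neg ℤ).prodCongr (Equiv.refl ℤ)
  have hσ : σ ⁻¹' {v ∈ posReps n | 0 ≤ v.1} = {v ∈ posReps n | v.1 ≤ 0} := by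
    ext ⟨x, y⟩
    simp [σ, posReps]
  have hfin := finite_posReps n
  rw [two_mul]
  nth_rw 2 [← Set.ncard_preimage_of_injective_subset_range σ.injective (by simp)]
  rw [hσ, ← Set.ncard_union_add_ncard_inter _ _ (hfin.subset (fun _ h => h.1))
    (hfin.subset (fun _ h => h.1))]
  congr 2
  · ext v; simp only [Set.mem_union, Set.mem_sep_iff]; constructor
    · rintro (h | h) <;> exact h.1
    · intro h; rcases le_total 0 v.1 with h' | h' <;> simp [h, h']
  · ext v; simp only [Set.mem_inter_iff, Set.mem_sep_iff]; constructor
    · rintro ⟨⟨h, h1⟩, -, h2⟩; exact ⟨h, le_antisymm h2 h1⟩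
    · rintro ⟨h, h0⟩; exact ⟨⟨h, h0.ge⟩, h, h0.le⟩

lemma ncard_fst_eq_zero_le_one (n : ℕ) : {v ∈ posReps n | v.1 = 0}.ncard ≤ 1 := by
  refine (Set.ncard_le_one ((finite_posReps n).subset fun _ h => h.1)).mpr ?_
  rintro ⟨x, y⟩ ⟨⟨h, hy⟩, rfl : x = 0⟩ ⟨x', y'⟩ ⟨⟨h', hy'⟩, rfl : x' = 0⟩
  simp only at h h' hy hy'
  rw [(pow_left_inj₀ hy.le hy'.le two_ne_zero).mp (by linarith)]

lemma ncard_fst_nonneg_eq (n : ℕ) :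
    {v ∈ posReps n | 0 ≤ v.1}.ncard = {v ∈ posReps n | 0 ≤ v.1 ∧ v.1 < n}.ncard + 1 := by
  have : {v ∈ posReps n | 0 ≤ v.1} =
      insert ((n : ℤ), 1) {v ∈ posReps n | 0 ≤ v.1 ∧ v.1 < n} := by
    ext ⟨x, y⟩
    simp only [posReps, Set.mem_insert_iff, Prod.mk.injEq, Set.mem_ofPred_eq]
    constructor
    · rintro ⟨⟨h, hy⟩, hx⟩
      rcases lt_or_ge x n with hxn | hxn
      · exact .inr ⟨⟨h, hy⟩, hx, hxn⟩
      · have hy1 : y = 1 := by nlinarith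
        subst hy1
        exact .inl ⟨by nlinarith, rfl⟩
    · rintro (⟨rfl, rfl⟩ | ⟨h, hx, -⟩)
      · exact ⟨⟨by ring, one_pos⟩, by positivity⟩
      · exact ⟨h, hx⟩
  rw [this, Set.ncard_insert_of_notMem (by simp) ((finite_posReps n).subset fun _ h => h.1)]

lemma two_mul_polygonal_three (c : ℤ) : 2 * polygonal 3 c = c * (c + 1) := by
  rw [polygonal, show c * ((3 - 2) * c - (3 - 4)) = c * (c + 1) by ring]
  exact Int.mul_ediv_cancel' (Int.even_mul_succ_self c).two_dvd

/-- A pair `(a, b)` with `a b = 29 c (c + 1) / 2` corresponds to `(x, y) = (b - a, 2 c + 1)`,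
since `2 (b - a)² + 29 (2 c + 1)² = 2 (a + b)² + 29`. -/
theorem rmt_three_29 (n : ℕ) : rmt 3 29 n = {v ∈ posReps n | 0 ≤ v.1 ∧ v.1 < n}.ncard := by
  symm
  refine Set.BijOn.ncard_eq
    (f := fun v => ((((n : ℤ) - v.1) / 2).toNat, (((n : ℤ) + v.1) / 2).toNat)) ⟨?_, ?_, ?_⟩
  · rintro ⟨x, y⟩ ⟨⟨h, hy⟩, hx, hxn⟩
    simp only at h hy hx hxn
    have h2 := two_dvd_sub_of_two_sq_add h
    obtain ⟨c, rfl⟩ := odd_of_two_sq_add h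
    have hc : 0 < c := by
      by_contra! hc
      have : c = 0 := by omega
      subst this
      nlinarith
    have hP := two_mul_polygonal_three c
    simp only [Set.mem_ofPred_eq, Nat.cast_ofNat]
    refine ⟨by omega, by omega, by omega, c, fun _ => hc, ?_⟩
    have ha : (((n - x) / 2).toNat : ℤ) * 2 = n - x := by omega
    have hb : (((n + x) / 2).toNat : ℤ) * 2 = n + x := by omega
    refine mul_left_cancel₀ (show (8 : ℤ) ≠ 0 by norm_num) ?_
    linear_combination 2 * (2 * (((n + x) / 2).toNat : ℤ)) * ha + 2 * (n - x) * hb - h - 116 * hP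
  · rintro ⟨x, y⟩ ⟨⟨h, hy⟩, -⟩ ⟨x', y'⟩ ⟨⟨h', hy'⟩, -⟩ heq
    simp only [Prod.mk.injEq] at h hy h' hy' heq ⊢
    have := two_dvd_sub_of_two_sq_add h
    have := two_dvd_sub_of_two_sq_add h'
    obtain rfl : x = x' := by omega
    exact ⟨rfl, (pow_left_inj₀ hy.le hy'.le two_ne_zero).mp (by linarith)⟩
  · rintro ⟨a, b⟩ ⟨ha, hab, hn, c, hc, hP⟩
    simp only [Nat.cast_ofNat, true_or, forall_const] at hc hP
    have h2P := two_mul_polygonal_three c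
    refine ⟨((b : ℤ) - a, 2 * c + 1), ⟨⟨?_, by omega⟩, by omega, by omega⟩, ?_⟩
    · simp only
      rw [← hn]; push_cast
      linear_combination -8 * hP - 116 * h2P
    · simp only [Prod.mk.injEq]; omega

theorem stmt_17_general (n : ℕ) :
    rmt 3 29 n = (dA {29} (2 * n ^ 2 + 29) - 1) / 2 := by
  have h₁ := two_mul_ncard_fst_nonneg n
  have h₂ := ncard_fst_nonneg_eq n
  have h₃ := ncard_fst_eq_zero_le_one n
  rw [rmt_three_29, ← ncard_posReps]
  omega

theorem stmt_17 (n : ℕ) (hn : 0 < n) :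
    rmt 3 29 n = (dA {29} (2 * n ^ 2 + 29) - 1) / 2 :=
  stmt_17_general n
end

section
/- For every positive integer n, r_{7,1}(n) = 0 if and only if 10n² + 9 is either a prime number or 9 times a prime number. -/
/-!
Writing `a = (n - x) / 2`, `b = (n + x) / 2` and using `40 P(7, c) + 9 = (10c - 3)²`, the pairs
counted by `r_{7,1}(n)` correspond to the representations `10n² + 9 = s² + 10x²` with `x < n`,
that is, other than the obvious one `(3, n)`. A prime has at most one representation by
`x² + 10y²` (Euler's argument), which gives one direction, also for `9p` since then `3 ∣ s, x`.
Conversely, `x² + 10y²` and `2x² + 5y²` are the reduced forms of discriminant `-40`: by Thue's lemma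
every divisor of `10u² + v²` prime to `3v` is represented by one of them, and composing the
representations of the two factors of a composite `10u² + v²` in the two possible ways yields a
representation whose first coordinate is not `±v`.
-/

def ReprOneTen (m : ℤ) : Prop := ∃ a b : ℤ, a ^ 2 + 10 * b ^ 2 = m

def ReprTwoFive (m : ℤ) : Prop := ∃ a b : ℤ, 2 * a ^ 2 + 5 * b ^ 2 = m

lemma three_dvd_of_three_dvd_sq_add_ten_sq {a b : ℤ} (h : 3 ∣ a ^ 2 + 10 * b ^ 2) :
    3 ∣ a ∧ 3 ∣ b := by
  have key : ∀ x y : ZMod 3, x ^ 2 + 10 * y ^ 2 = 0 → x = 0 ∧ y = 0 := by decide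
  have h' := (ZMod.intCast_zmod_eq_zero_iff_dvd _ 3).2 h
  push_cast at h'
  obtain ⟨ha, hb⟩ := key _ _ h'
  exact ⟨(ZMod.intCast_zmod_eq_zero_iff_dvd a 3).1 ha,
    (ZMod.intCast_zmod_eq_zero_iff_dvd b 3).1 hb⟩

lemma not_reprTwoFive_of_emod_ten {m : ℤ} (h : m % 10 = 1 ∨ m % 10 = 9) : ¬ ReprTwoFive m := by
  rintro ⟨a, b, rfl⟩
  have key : ∀ x y : ZMod 10, 2 * x ^ 2 + 5 * y ^ 2 ≠ 1 ∧ 2 * x ^ 2 + 5 * y ^ 2 ≠ 9 := by decide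
  obtain ⟨h1, h9⟩ := key a b
  rcases h with h | h
  · exact h1 (by exact_mod_cast (ZMod.intCast_eq_intCast_iff' _ 1 10).2 (by simpa using h))
  · exact h9 (by exact_mod_cast (ZMod.intCast_eq_intCast_iff' _ 9 10).2 (by simpa using h))

namespace ReprOneTen

lemma reprTwoFive_of_two_mul {m : ℤ} (h : ReprOneTen (2 * m)) : ReprTwoFive m := by
  obtain ⟨a, b, h⟩ := h
  obtain ⟨a, rfl⟩ : 2 ∣ a := Int.prime_two.dvd_of_dvd_pow (n := 2) ⟨m - 5 * b ^ 2, by linarith⟩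
  exact ⟨a, b, by linarith⟩

lemma reprTwoFive_of_five_mul {m : ℤ} (h : ReprOneTen (5 * m)) : ReprTwoFive m := by
  obtain ⟨a, b, h⟩ := h
  obtain ⟨a, rfl⟩ : 5 ∣ a :=
    (by norm_num : Prime (5 : ℤ)).dvd_of_dvd_pow (n := 2) ⟨m - 2 * b ^ 2, by linarith⟩
  exact ⟨b, a, by linarith⟩

/-- Modulo `7`, `a² + 10b² ≡ 0` forces `a ≡ ±2b`; the substitution `b = u - v`, `a = 2u + 5v`
turns `a² + 10b²` into `7(2u² + 5v²)`. -/
lemma reprTwoFive_of_seven_mul {m : ℤ} (h : ReprOneTen (7 * m)) : ReprTwoFive m := by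
  obtain ⟨a, b, h⟩ := h
  have key : ∀ x y : ZMod 7, x ^ 2 + 10 * y ^ 2 = 0 → x = 2 * y ∨ x = 2 * -y := by decide
  have h7 : ((a ^ 2 + 10 * b ^ 2 : ℤ) : ZMod 7) = 0 :=
    (ZMod.intCast_zmod_eq_zero_iff_dvd _ 7).2 ⟨m, h⟩
  push_cast at h7
  obtain ⟨b', hb', hab⟩ : ∃ b' : ℤ, b' ^ 2 = b ^ 2 ∧ (7 : ℤ) ∣ a - 2 * b' := by
    rcases key _ _ h7 with h' | h'
    · exact ⟨b, rfl, (ZMod.intCast_zmod_eq_zero_iff_dvd _ 7).1 (by push_cast; rw [h']; ring)⟩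
    · exact ⟨-b, by ring, (ZMod.intCast_zmod_eq_zero_iff_dvd _ 7).1 (by push_cast; rw [h']; ring)⟩
  obtain ⟨v, hv⟩ := hab
  have ha : a = 2 * b' + 7 * v := by linarith
  subst ha
  refine ⟨b' + v, v, mul_left_cancel₀ (show (7 : ℤ) ≠ 0 by norm_num) ?_⟩
  linear_combination h + 10 * hb'

lemma exists_eq_nine_mul {m : ℤ} (h : ReprOneTen m) (h3 : 3 ∣ m) :
    ∃ m', m = 9 * m' ∧ ReprOneTen m' := by
  obtain ⟨a, b, rfl⟩ := h
  obtain ⟨⟨a, rfl⟩, ⟨b, rfl⟩⟩ := three_dvd_of_three_dvd_sq_add_ten_sq h3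
  exact ⟨a ^ 2 + 10 * b ^ 2, by ring, a, b, rfl⟩

end ReprOneTen

namespace ReprTwoFive

lemma reprOneTen_of_two_mul {m : ℤ} (h : ReprTwoFive (2 * m)) : ReprOneTen m := by
  obtain ⟨a, b, h⟩ := h
  obtain ⟨b, rfl⟩ : 2 ∣ b := by
    refine Int.prime_two.dvd_of_dvd_pow (n := 2) ?_
    refine (Int.prime_two.dvd_or_dvd (a := 5) ⟨m - a ^ 2, by linarith⟩).resolve_left (by decide)
  exact ⟨a, b, by linarith⟩

lemma reprOneTen_of_five_mul {m : ℤ} (h : ReprTwoFive (5 * m)) : ReprOneTen m := by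
  obtain ⟨a, b, h⟩ := h
  have h5 : Prime (5 : ℤ) := by norm_num
  obtain ⟨a, rfl⟩ : 5 ∣ a := by
    refine h5.dvd_of_dvd_pow (n := 2) ?_
    exact (h5.dvd_or_dvd (a := 2) ⟨m - b ^ 2, by linarith⟩).resolve_left (by decide)
  exact ⟨b, a, by linarith⟩

end ReprTwoFive

/-- The cases `k = 3, 6` cannot occur since `3 ∣ a² + 10b²` forces `9 ∣ a² + 10b²`. -/
lemma reprOneTen_or_reprTwoFive_of_mul {k m : ℤ} (hk1 : 1 ≤ k) (hk10 : k ≤ 10) (h3 : ¬ 3 ∣ m)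
    (h : ReprOneTen (k * m)) : ReprOneTen m ∨ ReprTwoFive m := by
  interval_cases k
  · exact .inl (by simpa using h)
  · exact .inr h.reprTwoFive_of_two_mul
  · obtain ⟨m', hm', -⟩ := h.exists_eq_nine_mul (dvd_mul_right 3 m)
    omega
  · refine .inl (ReprOneTen.reprTwoFive_of_two_mul ?_).reprOneTen_of_two_mul
    rwa [← mul_assoc]
  · exact .inr h.reprTwoFive_of_five_mul
  · obtain ⟨m', hm', -⟩ := h.exists_eq_nine_mul (Dvd.intro (2 * m) (by ring))
    omega
  · exact .inr h.reprTwoFive_of_seven_mul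
  · refine .inr (ReprTwoFive.reprOneTen_of_two_mul ?_).reprTwoFive_of_two_mul
    refine ReprOneTen.reprTwoFive_of_two_mul ?_
    convert h using 1
    ring
  · obtain ⟨m', hm', hm'r⟩ := h.exists_eq_nine_mul (Dvd.intro (3 * m) (by ring))
    exact .inl (by rwa [show m = m' by omega])
  · refine .inl (ReprOneTen.reprTwoFive_of_two_mul ?_).reprOneTen_of_five_mul
    convert h using 1
    ring

/-- Thue's lemma. -/
lemma ZMod.exists_sq_le_intCast_eq_mul {m : ℕ} [NeZero m] (t : ZMod m) :
    ∃ x y : ℤ, (x ≠ 0 ∨ y ≠ 0) ∧ x ^ 2 ≤ m ∧ y ^ 2 ≤ m ∧ (x : ZMod m) = t * y := by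
  set r := m.sqrt
  have hr : ((r : ℤ)) ^ 2 ≤ m := by exact_mod_cast Nat.sqrt_le' m
  have hcard : (Finset.univ : Finset (ZMod m)).card <
      (Finset.range (r + 1) ×ˢ Finset.range (r + 1)).card := by
    rw [Finset.card_product, Finset.card_range, Finset.card_univ, ZMod.card, ← sq]
    exact Nat.lt_succ_sqrt' m
  obtain ⟨⟨a₁, b₁⟩, h₁, ⟨a₂, b₂⟩, h₂, hne, heq⟩ :=
    Finset.exists_ne_map_eq_of_card_lt_of_maps_to hcard
      (f := fun p : ℕ × ℕ => (p.1 : ZMod m) - t * p.2) (fun _ _ => Finset.mem_univ _)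
  simp only [Finset.mem_product, Finset.mem_range] at h₁ h₂
  have hbound : ∀ i j : ℕ, i < r + 1 → j < r + 1 → ((i : ℤ) - j) ^ 2 ≤ m := fun i j hi hj =>
    (sq_le_sq' (by omega) (by omega)).trans hr
  refine ⟨a₁ - a₂, b₁ - b₂, ?_, hbound _ _ h₁.1 h₂.1, hbound _ _ h₁.2 h₂.2, ?_⟩
  · by_contra! h0
    exact hne (Prod.ext (by omega) (by omega))
  · push_cast
    linear_combination heq

lemma reprOneTen_or_reprTwoFive_of_isSquare {m : ℕ} (h3 : ¬ 3 ∣ m)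
    (h : IsSquare (-10 : ZMod m)) : ReprOneTen m ∨ ReprTwoFive m := by
  have : NeZero m := ⟨by rintro rfl; exact h3 (dvd_zero 3)⟩
  obtain ⟨t, ht⟩ := h
  obtain ⟨x, y, hxy, hx, hy, hxty⟩ := ZMod.exists_sq_le_intCast_eq_mul t
  obtain ⟨k, hk⟩ : (m : ℤ) ∣ x ^ 2 + 10 * y ^ 2 := by
    refine (ZMod.intCast_zmod_eq_zero_iff_dvd _ m).1 ?_
    push_cast
    rw [hxty]
    linear_combination (y : ZMod m) ^ 2 * ht.symm
  have hm : (0 : ℤ) < m := by exact_mod_cast Nat.pos_of_neZero m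
  have hpos : 0 < x ^ 2 + 10 * y ^ 2 := by
    rcases hxy with h | h <;> positivity
  have hk1 : 1 ≤ k := by nlinarith
  have hk11 : k ≤ 11 := by nlinarith
  rcases hk11.lt_or_eq with hk10 | rfl
  · exact reprOneTen_or_reprTwoFive_of_mul hk1 (by omega) (by exact_mod_cast h3)
      ⟨x, y, by rw [hk, mul_comm]⟩
  · -- `x ^ 2 + 10 * y ^ 2 = 11 * m` with `x ^ 2, y ^ 2 ≤ m` forces `x ^ 2 = m`
    exact .inl ⟨x, 0, by nlinarith⟩

lemma isSquare_neg_ten_of_dvd {u v d : ℕ} (hd : d ∣ 10 * u ^ 2 + v ^ 2) (hv : Nat.Coprime v d) :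
    IsSquare (-10 : ZMod d) := by
  have h0 : (10 * u ^ 2 + v ^ 2 : ZMod d) = 0 := by
    exact_mod_cast (ZMod.natCast_eq_zero_iff _ d).2 hd
  set w : ZMod d := ↑(ZMod.unitOfCoprime v hv)⁻¹
  have hw : (v : ZMod d) * w = 1 := by
    rw [← ZMod.coe_unitOfCoprime v hv, Units.mul_inv]
  exact ⟨10 * u * w, by linear_combination (-10 * w ^ 2) * h0 + 10 * (v * w + 1) * hw⟩

/-- Composing the representations of `q` and `M` in the two possible ways gives two
representations of `q M` by `x² + 10y²`; their first coordinates agree up to sign only if a factor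
is a square or divisible by `2` or `5`. -/
lemma exists_sq_add_ten_sq_ne {q M c : ℤ} (hK : q * M % 10 = 1 ∨ q * M % 10 = 9)
    (hq : ReprOneTen q ∨ ReprTwoFive q) (hM : ReprOneTen M ∨ ReprTwoFive M)
    (hqc : ¬ q ∣ c ^ 2) (hMc : ¬ M ∣ c ^ 2) :
    ∃ A B : ℤ, A ^ 2 + 10 * B ^ 2 = q * M ∧ A ^ 2 ≠ c ^ 2 := by
  have hK2 : ¬ 2 ∣ q * M := by omega
  have hK5 : ¬ 5 ∣ q * M := by omega
  rcases hq with ⟨a, b, rfl⟩ | ⟨a, b, rfl⟩ <;> rcases hM with ⟨z, w, rfl⟩ | ⟨z, w, rfl⟩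
  · by_cases h₁ : (a * z - 10 * b * w) ^ 2 = c ^ 2
    swap
    · exact ⟨_, a * w + b * z, by ring, h₁⟩
    by_cases h₂ : (a * z + 10 * b * w) ^ 2 = c ^ 2
    swap
    · exact ⟨_, a * w - b * z, by ring, h₂⟩
    have h40 : 40 * (a * b * z * w) = 0 := by linear_combination h₂ - h₁
    have habzw := (mul_eq_zero.1 h40).resolve_left (by norm_num)
    simp only [mul_eq_zero] at habzw
    rcases habzw with ((rfl | rfl) | rfl) | rfl
    · exact (hK2 ⟨5 * b ^ 2 * (z ^ 2 + 10 * w ^ 2), by ring⟩).elim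
    · exact (hqc ⟨z ^ 2, by rw [← h₁]; ring⟩).elim
    · exact (hK2 ⟨5 * w ^ 2 * (a ^ 2 + 10 * b ^ 2), by ring⟩).elim
    · exact (hMc ⟨a ^ 2, by rw [← h₁]; ring⟩).elim
  · exact absurd ⟨a * z + 5 * b * w, a * w - 2 * b * z, by ring⟩ (not_reprTwoFive_of_emod_ten hK)
  · exact absurd ⟨a * z + 5 * b * w, b * z - 2 * a * w, by ring⟩ (not_reprTwoFive_of_emod_ten hK)
  · by_cases h₁ : (2 * a * z + 5 * b * w) ^ 2 = c ^ 2
    swap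
    · exact ⟨_, a * w - b * z, by ring, h₁⟩
    by_cases h₂ : (2 * a * z - 5 * b * w) ^ 2 = c ^ 2
    swap
    · exact ⟨_, a * w + b * z, by ring, h₂⟩
    have h40 : 40 * (a * b * z * w) = 0 := by linear_combination h₁ - h₂
    have habzw := (mul_eq_zero.1 h40).resolve_left (by norm_num)
    simp only [mul_eq_zero] at habzw
    rcases habzw with ((rfl | rfl) | rfl) | rfl
    · exact (hK5 ⟨b ^ 2 * (2 * z ^ 2 + 5 * w ^ 2), by ring⟩).elim
    · exact (hK2 ⟨a ^ 2 * (2 * z ^ 2 + 5 * w ^ 2), by ring⟩).elim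
    · exact (hK5 ⟨w ^ 2 * (2 * a ^ 2 + 5 * b ^ 2), by ring⟩).elim
    · exact (hK2 ⟨z ^ 2 * (2 * a ^ 2 + 5 * b ^ 2), by ring⟩).elim

lemma sq_mod_ten_of_coprime {v : ℕ} (hv : Nat.Coprime v 10) : v ^ 2 % 10 = 1 ∨ v ^ 2 % 10 = 9 := by
  have h2 : ¬ 2 ∣ v := fun h => absurd (Nat.Coprime.coprime_dvd_left h hv) (by decide)
  have h5 : ¬ 5 ∣ v := fun h => absurd (Nat.Coprime.coprime_dvd_left h hv) (by decide)
  have hv10 : v % 10 = 1 ∨ v % 10 = 3 ∨ v % 10 = 7 ∨ v % 10 = 9 := by omega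
  rw [Nat.pow_mod]
  rcases hv10 with h | h | h | h <;> simp [h]

lemma exists_sq_add_ten_sq_ne_of_not_prime {u v : ℕ} (hu : 0 < u) (hv : Nat.Coprime v (10 * u))
    (h3 : ¬ 3 ∣ 10 * u ^ 2 + v ^ 2) (hK : ¬ (10 * u ^ 2 + v ^ 2).Prime) :
    ∃ A B : ℤ, A ^ 2 + 10 * B ^ 2 = 10 * u ^ 2 + v ^ 2 ∧ A ^ 2 ≠ v ^ 2 := by
  set K := 10 * u ^ 2 + v ^ 2 with hKdef
  have hvK : Nat.Coprime v K := by
    rw [hKdef, sq v, Nat.coprime_add_mul_right_right]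
    exact hv.coprime_mul_right_right.mul_right (hv.coprime_mul_left_right.pow_right 2)
  have hdiv : ∀ d, d ∣ K → d ≠ 1 → (ReprOneTen d ∨ ReprTwoFive d) ∧ ¬ (d : ℤ) ∣ (v : ℤ) ^ 2 := by
    intro d hd hd1
    have hvd : Nat.Coprime v d := hvK.coprime_dvd_right hd
    refine ⟨reprOneTen_or_reprTwoFive_of_isSquare (fun h => h3 (h.trans hd))
      (isSquare_neg_ten_of_dvd hd hvd), fun h => hd1 ?_⟩
    exact (hvd.symm.pow_right 2).eq_one_of_dvd (by exact_mod_cast h)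
  have hK1 : K ≠ 1 := by
    have : 0 < u ^ 2 := by positivity
    omega
  obtain ⟨M, hqM⟩ := K.minFac_dvd
  have hq := Nat.minFac_prime hK1
  have hM1 : M ≠ 1 := by
    rintro rfl
    exact hK (by rwa [hqM, mul_one])
  obtain ⟨hqr, hqv⟩ := hdiv _ K.minFac_dvd hq.ne_one
  obtain ⟨hMr, hMv⟩ := hdiv _ (Dvd.intro_left _ hqM.symm) hM1
  have hmod : (K.minFac : ℤ) * M % 10 = 1 ∨ (K.minFac : ℤ) * M % 10 = 9 := by
    have := sq_mod_ten_of_coprime (hv.coprime_mul_right_right)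
    have hKZ : ((K.minFac * M : ℕ) : ℤ) = 10 * u ^ 2 + v ^ 2 := by
      rw [← hqM, hKdef]
      push_cast
      ring
    push_cast at hKZ
    omega
  obtain ⟨A, B, hAB, hA⟩ := exists_sq_add_ten_sq_ne hmod hqr hMr hqv hMv
  exact ⟨A, B, by rw [hAB]; exact_mod_cast hqM.symm, hA⟩

lemma exists_sq_add_ten_sq_lt_of_sq_ne {n : ℕ} {A B : ℤ} (h : A ^ 2 + 10 * B ^ 2 = 10 * n ^ 2 + 9)
    (hA : A ^ 2 ≠ 9) : ∃ s x : ℕ, s ^ 2 + 10 * x ^ 2 = 10 * n ^ 2 + 9 ∧ x < n := by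
  have h' : A.natAbs ^ 2 + 10 * B.natAbs ^ 2 = 10 * n ^ 2 + 9 := by
    zify
    rwa [sq_abs, sq_abs]
  have hA' : A.natAbs ^ 2 ≠ 9 := by
    zify
    rwa [sq_abs]
  refine ⟨A.natAbs, B.natAbs, h', ?_⟩
  by_contra! hn
  have := Nat.pow_le_pow_left hn 2
  omega

lemma exists_sq_add_ten_sq_lt_of_not_prime {n : ℕ} (hn : 0 < n) (hN : ¬ (10 * n ^ 2 + 9).Prime)
    (h9 : ∀ p : ℕ, p.Prime → 10 * n ^ 2 + 9 ≠ 9 * p) :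
    ∃ s x : ℕ, s ^ 2 + 10 * x ^ 2 = 10 * n ^ 2 + 9 ∧ x < n := by
  by_cases h3 : 3 ∣ n
  · obtain ⟨m, rfl⟩ := h3
    have hm3 : ¬ 3 ∣ 10 * m ^ 2 + 1 ^ 2 := by
      have := Nat.pow_mod m 2 3
      have : m % 3 < 3 := Nat.mod_lt _ (by norm_num)
      interval_cases h : m % 3 <;> omega
    obtain ⟨A, B, hAB, hA⟩ := exists_sq_add_ten_sq_ne_of_not_prime (by omega)
      (Nat.coprime_one_left _) hm3 (fun hp => h9 _ hp (by ring))
    refine exists_sq_add_ten_sq_lt_of_sq_ne (A := 3 * A) (B := 3 * B) ?_ ?_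
    · push_cast at hAB ⊢
      linear_combination 9 * hAB
    · contrapose! hA
      push_cast
      linarith
  · have h3' : ¬ 3 ∣ 10 * n ^ 2 + 3 ^ 2 :=
      fun h => h3 (Nat.prime_three.dvd_of_dvd_pow (n := 2) (by omega))
    have hcop : Nat.Coprime 3 (10 * n) :=
      Nat.Coprime.mul_right (by norm_num) ((Nat.Prime.coprime_iff_not_dvd Nat.prime_three).2 h3)
    obtain ⟨A, B, hAB, hA⟩ := exists_sq_add_ten_sq_ne_of_not_prime hn hcop h3' (by simpa using hN)
    push_cast at hAB hA
    exact exists_sq_add_ten_sq_lt_of_sq_ne hAB hA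

lemma Nat.Prime.eq_of_sq_add_ten_sq_eq {p a b c d : ℕ} (hp : p.Prime)
    (h₁ : a ^ 2 + 10 * b ^ 2 = p) (h₂ : c ^ 2 + 10 * d ^ 2 = p) : a = c ∧ b = d := by
  have hP : _root_.Prime (p : ℤ) := Nat.prime_iff_prime_int.mp hp
  have hp0 : (0 : ℤ) < p := by exact_mod_cast hp.pos
  zify at h₁ h₂
  have hprod : ((a : ℤ) * d - b * c) * (a * d + b * c) = p * (d ^ 2 - b ^ 2) := by
    linear_combination d ^ 2 * h₁ - b ^ 2 * h₂
  have habs : ∀ e : ℤ, (p : ℤ) ∣ a * d + e * b * c → e ^ 2 = 1 → (a : ℤ) * d + e * b * c = 0 := by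
    intro e he he2
    refine Int.eq_zero_of_abs_lt_dvd he (abs_lt_of_sq_lt_sq ?_ hp0.le)
    have hcomp : ((a : ℤ) ^ 2 + 10 * b ^ 2) * (c ^ 2 + 10 * d ^ 2) =
        (a * c - e * 10 * b * d) ^ 2 + 10 * (a * d + e * b * c) ^ 2 := by
      linear_combination (-(10 * b ^ 2 * c ^ 2) - 100 * b ^ 2 * d ^ 2) * he2
    rw [h₁, h₂] at hcomp
    nlinarith
  have had : (a : ℤ) * d = b * c := by
    rcases hP.dvd_or_dvd ⟨_, hprod⟩ with h | h
    · linarith [habs (-1) (by simpa [sub_eq_add_neg] using h) (by norm_num)]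
    · have := habs 1 (by simpa using h) (by norm_num)
      nlinarith [mul_nonneg (Int.natCast_nonneg a) (Int.natCast_nonneg d),
        mul_nonneg (Int.natCast_nonneg b) (Int.natCast_nonneg c)]
  have hbd : (b : ℤ) ^ 2 = d ^ 2 := by
    have h0 : (p : ℤ) * (d ^ 2 - b ^ 2) = 0 := by rw [← hprod, had]; ring
    have := (_root_.mul_eq_zero.1 h0).resolve_left hp0.ne'
    linarith
  have hac : (a : ℤ) ^ 2 = c ^ 2 := by linarith
  exact ⟨Nat.pow_left_injective two_ne_zero (by exact_mod_cast hac),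
    Nat.pow_left_injective two_ne_zero (by exact_mod_cast hbd)⟩

lemma not_exists_sq_add_ten_sq_lt_of_prime {n : ℕ} (hN : (10 * n ^ 2 + 9).Prime) :
    ¬ ∃ s x : ℕ, s ^ 2 + 10 * x ^ 2 = 10 * n ^ 2 + 9 ∧ x < n := by
  rintro ⟨s, x, h, hx⟩
  have := (hN.eq_of_sq_add_ten_sq_eq h (by ring : 3 ^ 2 + 10 * n ^ 2 = _)).2
  omega

lemma not_exists_sq_add_ten_sq_lt_of_eq_nine_mul {n p : ℕ} (hp : p.Prime)
    (hN : 10 * n ^ 2 + 9 = 9 * p) : ¬ ∃ s x : ℕ, s ^ 2 + 10 * x ^ 2 = 10 * n ^ 2 + 9 ∧ x < n := by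
  rintro ⟨s, x, h, hx⟩
  obtain ⟨m, rfl⟩ : 3 ∣ n := Nat.prime_three.dvd_of_dvd_pow (n := 2) (by omega)
  have h3 : (3 : ℤ) ∣ s ^ 2 + 10 * x ^ 2 := ⟨3 * p, by exact_mod_cast h.trans (by omega)⟩
  obtain ⟨hs, hx3⟩ := three_dvd_of_three_dvd_sq_add_ten_sq h3
  obtain ⟨s, rfl⟩ : 3 ∣ s := by exact_mod_cast hs
  obtain ⟨x, rfl⟩ : 3 ∣ x := by exact_mod_cast hx3
  have hrep : s ^ 2 + 10 * x ^ 2 = p := by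
    ring_nf at h hN
    omega
  have := (hp.eq_of_sq_add_ten_sq_eq hrep (show 1 ^ 2 + 10 * m ^ 2 = p by ring_nf at hN; omega)).2
  omega

lemma forty_mul_polygonal_seven_add_nine (c : ℤ) : 40 * polygonal 7 c + 9 = (10 * c - 3) ^ 2 := by
  have h2 : 2 ∣ c * ((7 - 2) * c - (7 - 4)) := by
    rcases Int.even_or_odd c with ⟨k, rfl⟩ | ⟨k, rfl⟩
    · exact ⟨k * (10 * k - 3), by ring⟩
    · exact ⟨(2 * k + 1) * (5 * k + 1), by ring⟩
  rw [polygonal]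
  linear_combination 20 * Int.ediv_mul_cancel h2

lemma exists_polygonal_seven_eq_iff (x : ℤ) :
    (∃ c, polygonal 7 c = x) ↔ ∃ s : ℕ, (s : ℤ) ^ 2 = 40 * x + 9 := by
  constructor
  · rintro ⟨c, rfl⟩
    exact ⟨(10 * c - 3).natAbs, by rw [Int.natAbs_sq, forty_mul_polygonal_seven_add_nine]⟩
  · rintro ⟨s, hs⟩
    have hs10 : s ^ 2 % 10 = 9 := by
      have : ((s ^ 2 : ℕ) : ℤ) = 40 * x + 9 := by exact_mod_cast hs
      omega
    have hsm : s % 10 = 3 ∨ s % 10 = 7 := by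
      have := Nat.pow_mod s 2 10
      have : s % 10 < 10 := Nat.mod_lt _ (by norm_num)
      interval_cases h : s % 10 <;> omega
    obtain ⟨c, hc⟩ : ∃ c : ℤ, (10 * c - 3) ^ 2 = (s : ℤ) ^ 2 := by
      rcases hsm with h | h
      · obtain ⟨w, rfl⟩ : ∃ w, s = 10 * w + 3 := ⟨s / 10, by omega⟩
        exact ⟨-w, by push_cast; ring⟩
      · obtain ⟨w, rfl⟩ : ∃ w, s = 10 * w + 7 := ⟨s / 10, by omega⟩
        exact ⟨w + 1, by push_cast; ring⟩
    exact ⟨c, by linarith [forty_mul_polygonal_seven_add_nine c]⟩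

lemma even_add_of_sq_add_ten_sq_eq {s x n : ℕ} (h : s ^ 2 + 10 * x ^ 2 = 10 * n ^ 2 + 9) :
    Even (n + x) := by
  by_contra hodd
  obtain ⟨k, hk⟩ := Nat.not_even_iff_odd.1 hodd
  have key : ∀ s x k : ZMod 4, s ^ 2 + 10 * x ^ 2 ≠ 10 * (2 * k + 1 - x) ^ 2 + 9 := by decide
  have hn : (n : ZMod 4) = 2 * k + 1 - x := by
    rw [eq_sub_iff_add_eq]
    simpa using congrArg (Nat.cast : ℕ → ZMod 4) hk
  refine key s x k ?_
  rw [← hn]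
  simpa using congrArg (Nat.cast : ℕ → ZMod 4) h

lemma rmt_seven_one_eq_zero_iff (n : ℕ) :
    rmt 7 1 n = 0 ↔ ¬ ∃ s x : ℕ, s ^ 2 + 10 * x ^ 2 = 10 * n ^ 2 + 9 ∧ x < n := by
  rw [rmt, Set.ncard_eq_zero (((Set.finite_Iic n).prod (Set.finite_Iic n)).subset ?_),
    ← Set.not_nonempty_iff_eq_empty, not_iff_not]
  swap
  · rintro ⟨a, b⟩ ⟨-, -, hab, -⟩
    exact ⟨Set.mem_Iic.2 (by omega), Set.mem_Iic.2 (by omega)⟩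
  simp only [Nat.cast_ofNat, Nat.cast_one, one_mul]
  constructor
  · rintro ⟨⟨a, b⟩, ha, hab, rfl, c, -, hc⟩
    obtain ⟨s, hs⟩ := (exists_polygonal_seven_eq_iff _).1 ⟨c, hc.symm⟩
    refine ⟨s, b - a, ?_, by omega⟩
    zify [hab]
    linear_combination hs
  · rintro ⟨s, x, h, hx⟩
    obtain ⟨k, hk⟩ := even_add_of_sq_add_ten_sq_eq h
    obtain ⟨c, hc⟩ := (exists_polygonal_seven_eq_iff ((k - x : ℕ) * k)).2 ⟨s, by
      zify [show x ≤ k by omega] at h hk ⊢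
      linear_combination h + (10 * (n - x) + 20 * k) * hk⟩
    exact ⟨(k - x, k), by omega, by omega, by omega, c, by omega, hc.symm⟩

theorem stmt_19 (n : ℕ) (hn : 0 < n) :
    rmt 7 1 n = 0 ↔
      (10 * n ^ 2 + 9).Prime ∨ ∃ p : ℕ, p.Prime ∧ 10 * n ^ 2 + 9 = 9 * p := by
  rw [rmt_seven_one_eq_zero_iff]
  constructor
  · intro h
    by_contra! hN
    exact h (exists_sq_add_ten_sq_lt_of_not_prime hn hN.1 hN.2)
  · rintro (hN | ⟨p, hp, hN⟩)
    · exact not_exists_sq_add_ten_sq_lt_of_prime hN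
    · exact not_exists_sq_add_ten_sq_lt_of_eq_nine_mul hp hN
end
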